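/- arXiv:1808.03851 — 10 statements merged into one kernel-verified Lean document; each statement's English description precedes it below -/
import Mathlib

section
/- Let r be an odd prime and let k be a multiple of r with k ≥ 2r. Then every coloring χ : {1,…,kr−r} → ℤ/rℤ admits an r-zero-sum solution to the equation E; equivalently, S_z(k,r) ≤ kr − r. -/
/-- `hasZeroSumSolution k r N χ` says the coloring `χ` of `{1,…,N}` by `ZMod r`
admits an `r`-zero-sum solution to `x₁ + ⋯ + x_{k-1} = x_k`. -/
def hasZeroSumSolution (k r N : ℕ) (χ : ℕ → ZMod r) : Prop :=
  ∃ (x : Fin (k - 1) → ℕ) (y : ℕ),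
    (∀ i, 1 ≤ x i ∧ x i ≤ N) ∧ (1 ≤ y ∧ y ≤ N) ∧
    (∑ i, x i) = y ∧
    (∑ i, χ (x i)) + χ y = 0

/-!
If for `a = k` or `a = k - 1` some `δ < a` breaks the symmetry
`χ (a - δ) + χ (1 + δ) = χ a + χ 1`, start from the `k - 1` summands `(r - 1) × a, (k - r) × 1`
and trade `j` pairs `a, 1` for pairs `a - δ, 1 + δ`: the sum stays `(r - 1) a + k - r ≤ kr - r`,
while the colour sum moves by `j` times a nonzero element of the field `ZMod r`, so some `j < r`
makes it vanish. Otherwise both symmetries hold, which forces `χ` to be affine on `[1, k]`, and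
then `2 + (k - 2) × 1 = k` is a zero-sum solution because `r ∣ k`.
-/

theorem hasZeroSumSolution_of_list {k r N : ℕ} {χ : ℕ → ZMod r} (L : List ℕ)
    (hlen : L.length = k - 1) (hmem : ∀ v ∈ L, 1 ≤ v ∧ v ≤ N) (hsum : 1 ≤ L.sum ∧ L.sum ≤ N)
    (hχ : (L.map χ).sum + χ L.sum = 0) : hasZeroSumSolution k r N χ := by
  refine ⟨fun i ↦ L[i.cast hlen.symm], L.sum, fun i ↦ hmem _ (List.getElem_mem _), hsum, ?_, ?_⟩
  · exact (Fin.sum_congr' (fun i ↦ L[i.1]) hlen.symm).trans (Fin.sum_univ_getElem L)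
  · rw [← hχ, ← Fin.sum_univ_fun_getElem]
    exact congrArg (· + _) (Fin.sum_congr' (fun i ↦ χ L[i.1]) hlen.symm)

theorem ZMod.exists_natCast_mul_eq {p : ℕ} [Fact p.Prime] {w : ZMod p} (hw : w ≠ 0) (c : ZMod p) :
    ∃ j < p, (j : ZMod p) * w = c :=
  ⟨(c * w⁻¹).val, ZMod.val_lt _, by rw [ZMod.natCast_zmod_val, inv_mul_cancel_right₀ hw]⟩

theorem hasZeroSumSolution_of_add_ne {k r N a δ : ℕ} {χ : ℕ → ZMod r} (hr : r.Prime)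
    (hdvd : r ∣ k) (hk : 2 * r ≤ k) (hδa : δ < a)
    (hN : (r - 1) * a + (k - r) ≤ N) (hne : χ (a - δ) + χ (1 + δ) ≠ χ a + χ 1) :
    hasZeroSumSolution k r N χ := by
  have := Fact.mk hr
  obtain ⟨j, hjr, hj⟩ := ZMod.exists_natCast_mul_eq (sub_ne_zero.mpr hne)
    (χ a - χ ((r - 1) * a + (k - r)))
  obtain ⟨s, hs⟩ : ∃ s, j + s + 1 = r := ⟨r - 1 - j, by omega⟩
  obtain ⟨m, hm⟩ : ∃ m, r + j + m = k := ⟨k - r - j, by omega⟩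
  have hy : (r - 1) * a + (k - r) = (j + s) * a + (j + m) := by
    rw [show r - 1 = j + s by omega, show k - r = j + m by omega]
  have hr0 : (r : ZMod r) = 0 := ZMod.natCast_self r
  have hs0 : ((j + s + 1 : ℕ) : ZMod r) = 0 := hs ▸ hr0
  have hm0 : ((r + j + m : ℕ) : ZMod r) = 0 := hm ▸ (ZMod.natCast_eq_zero_iff k r).mpr hdvd
  rw [hy] at hN hj
  have ha : a ≤ (j + s) * a + (j + m) := by nlinarith [hr.two_le]
  set L := List.replicate j (a - δ) ++ List.replicate j (1 + δ) ++ List.replicate s a ++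
    List.replicate m 1
  have hsum : L.sum = (j + s) * a + (j + m) := by
    simp only [L, List.sum_append, List.sum_replicate, smul_eq_mul, mul_one]
    zify [hδa.le]
    ring
  apply hasZeroSumSolution_of_list L
  · simp only [L, List.length_append, List.length_replicate]
    omega
  · intro v hv
    simp only [L, List.mem_append, List.mem_replicate] at hv
    omega
  · rw [hsum]
    omega
  · simp only [hsum, L, List.map_append, List.map_replicate, List.sum_append, List.sum_replicate,
      nsmul_eq_mul]
    push_cast at hs0 hm0
    linear_combination hj + χ a * hs0 + χ 1 * hm0 - χ 1 * hr0

theorem hasZeroSumSolution_of_forall_add_eq {k r N : ℕ} {χ : ℕ → ZMod r} (hdvd : r ∣ k)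
    (hk : 2 ≤ k) (hN : k ≤ N)
    (hsym : ∀ a, k - 1 ≤ a → a ≤ k → ∀ δ, 1 ≤ δ → δ < a → χ (a - δ) + χ (1 + δ) = χ a + χ 1) :
    hasZeroSumSolution k r N χ := by
  set d := χ k - χ (k - 1)
  have hstep : ∀ i < k - 1, χ (i + 1 + 1) - χ (i + 1) = d := by
    intro i hi
    rcases (by omega : i + 2 = k ∨ i + 2 < k) with hik | hik
    · rw [hik, show i + 1 = k - 1 by omega]
    · have h₁ := hsym k (by omega) le_rfl (k - (i + 2)) (by omega) (by omega)
      have h₂ := hsym (k - 1) le_rfl (by omega) (k - (i + 2)) (by omega) (by omega)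
      rw [show k - (k - (i + 2)) = i + 1 + 1 by omega] at h₁
      rw [show k - 1 - (k - (i + 2)) = i + 1 by omega] at h₂
      linear_combination h₁ - h₂
  have htel : χ k - χ 1 = (k - 1 : ℕ) • d := by
    have := Finset.sum_range_sub (fun i ↦ χ (i + 1)) (k - 1)
    rwa [Finset.sum_congr rfl fun i hi ↦ hstep i (Finset.mem_range.mp hi), Finset.sum_const,
      Finset.card_range, Nat.sub_add_cancel (by omega), eq_comm] at this
  have hk0 : (k : ZMod r) = 0 := (ZMod.natCast_eq_zero_iff k r).mpr hdvd
  have hsum : (2 :: List.replicate (k - 2) 1).sum = k := by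
    simp only [List.sum_cons, List.sum_replicate, smul_eq_mul, mul_one]
    omega
  apply hasZeroSumSolution_of_list (2 :: List.replicate (k - 2) 1)
  · simp only [List.length_cons, List.length_replicate]
    omega
  · intro v hv
    simp only [List.mem_cons, List.mem_replicate] at hv
    omega
  · rw [hsum]
    omega
  · have h₂ : χ 2 - χ 1 = d := hstep 0 (by omega)
    rw [nsmul_eq_mul, Nat.cast_sub (by omega), Nat.cast_one] at htel
    simp only [hsum, List.map_cons, List.map_replicate, List.sum_cons, List.sum_replicate,
      nsmul_eq_mul, Nat.cast_sub hk]
    linear_combination h₂ + htel + (χ 1 + d) * hk0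

theorem zero_sum_schur_upper_prime_general (r k : ℕ) (hrp : r.Prime)
    (hdvd : r ∣ k) (hk : 2 * r ≤ k) (χ : ℕ → ZMod r) :
    hasZeroSumSolution k r (k * r - r) χ := by
  have hr := hrp.two_le
  have hN : ∀ a ≤ k, (r - 1) * a + (k - r) ≤ k * r - r := fun a ha ↦ by
    zify [show 1 ≤ r by omega, show r ≤ k by omega, show r ≤ k * r by nlinarith]
    nlinarith
  by_contra h
  refine h (hasZeroSumSolution_of_forall_add_eq hdvd (by omega)
    (Nat.le_sub_of_add_le (by nlinarith)) ?_)
  intro a _ ha δ _ hδa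
  by_contra hne
  exact h (hasZeroSumSolution_of_add_ne hrp hdvd hk hδa (hN a ha) hne)

theorem zero_sum_schur_upper_prime (r k : ℕ) (hrp : r.Prime) (hodd : Odd r)
    (hdvd : r ∣ k) (hk : 2 * r ≤ k) (χ : ℕ → ZMod r) :
    hasZeroSumSolution k r (k * r - r) χ :=
  zero_sum_schur_upper_prime_general r k hrp hdvd hk χ
end

section
/- Let k be a multiple of 4 with k ≥ 8. Then every coloring χ : {1,…,4k−5} → ℤ/4ℤ admits a 4-zero-sum solution to the equation E; equivalently, S_z(k,4) ≤ 4k − 5. -/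
namespace ZMod4

lemma even_or_odd (a : ZMod 4) : (a = 0 ∨ a = 2) ∨ (a = 1 ∨ a = 3) := by
  revert a; decide

lemma two_mul_eq_zero_or_eq_two (a : ZMod 4) : 2 * a = 0 ∨ 2 * a = 2 := by
  revert a; decide

lemma eq_zero_of_odd_of_add_ne_zero {w v : ZMod 4} (hw : w = 1 ∨ w = 3) (h₁ : w + v ≠ 0)
    (h₂ : w + w + v ≠ 0) (h₃ : w + w + w + v ≠ 0) : v = 0 := by
  revert h₁ h₂ h₃; rcases hw with rfl | rfl <;> revert v <;> decide

end ZMod4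

theorem hasZeroSumSolution_of_list_s1 {k r N : ℕ} {χ : ℕ → ZMod r} (xs : List ℕ)
    (hlen : xs.length = k - 1) (hpos : ∀ x ∈ xs, 1 ≤ x) (hsum_pos : 1 ≤ xs.sum)
    (hsum : xs.sum ≤ N) (hzero : (xs.map χ).sum + χ xs.sum = 0) :
    hasZeroSumSolution k r N χ := by
  refine ⟨fun i => xs[(i.cast hlen.symm : Fin xs.length)], xs.sum,
    fun i => ⟨hpos _ (List.getElem_mem _), (List.le_sum_of_mem (List.getElem_mem _)).trans hsum⟩,
    ⟨hsum_pos, hsum⟩, ?_, ?_⟩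
  · exact (Fin.sum_congr' _ hlen.symm).trans (Fin.sum_univ_getElem xs)
  · convert hzero using 2
    exact (Fin.sum_congr' _ hlen.symm).trans (Fin.sum_univ_fun_getElem xs χ)

def normalizedColoring {r : ℕ} (χ : ℕ → ZMod r) (n : ℕ) : ZMod r :=
  χ n - χ 1 - (n - 1) * (χ 2 - χ 1)

@[simp] lemma normalizedColoring_one {r : ℕ} (χ : ℕ → ZMod r) : normalizedColoring χ 1 = 0 := by
  simp [normalizedColoring]

@[simp] lemma normalizedColoring_two {r : ℕ} (χ : ℕ → ZMod r) : normalizedColoring χ 2 = 0 := by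
  simp only [normalizedColoring, Nat.cast_ofNat]; ring

lemma sum_map_eq_sum_map_normalizedColoring {r : ℕ} (χ : ℕ → ZMod r) (L : List ℕ) :
    (L.map χ).sum = (L.map (normalizedColoring χ)).sum + L.length * (χ 1 - (χ 2 - χ 1))
      + L.sum * (χ 2 - χ 1) := by
  induction L with
  | nil => simp
  | cons a L ih =>
    simp only [List.map_cons, List.sum_cons, List.length_cons, ih, normalizedColoring]
    push_cast; ring

/-- No solution whose summands are the entries of `L`, `u` twos and `c` ones has zero color sum,
when the entries of `L` are colored by `φ`, the ones and twos are left uncolored and the total `y`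
is colored by `ψ`. -/
def PaddedSolutionFree (k N : ℕ) {r : ℕ} (φ ψ : ℕ → ZMod r) : Prop :=
  ∀ (L : List ℕ) (u c y : ℕ), (∀ n ∈ L, 1 ≤ n) → L.length + u + c + 1 = k →
    L.sum + 2 * u + c = y → 1 ≤ y → y ≤ N → (L.map φ).sum + ψ y ≠ 0

/-- `χ` differs from its normalization by the affine map `n ↦ (χ 1 - p) + n p`, `p = χ 2 - χ 1`,
which adds `k (χ 1 - p) + 2 y p` to the color sum of a solution with total `y`. -/
theorem paddedSolutionFree_normalizedColoring {k r N : ℕ} {χ : ℕ → ZMod r}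
    (hk : (k : ZMod r) = 0) (h : ¬hasZeroSumSolution k r N χ) :
    PaddedSolutionFree k N (normalizedColoring χ)
      (fun y => normalizedColoring χ y + y * (2 * (χ 2 - χ 1))) := by
  intro L u c y hL hlen hy hy1 hyN hzero
  have hlen' : (L.length + u + c + 1 : ZMod r) = 0 := by rw [← hk, ← hlen]; push_cast; ring
  have hy' : (L.sum + 2 * u + c : ZMod r) = y := by rw [← hy]; push_cast; ring
  have hsum : (L ++ List.replicate u 2 ++ List.replicate c 1).sum = y := by simp; omega
  apply h
  refine hasZeroSumSolution_of_list_s1 (L ++ List.replicate u 2 ++ List.replicate c 1)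
    (by simp; omega) ?_ (by omega) (by omega) ?_
  · intro x hx
    simp only [List.mem_append, List.mem_replicate] at hx
    rcases hx with (hx | ⟨-, rfl⟩) | ⟨-, rfl⟩
    exacts [hL x hx, by norm_num, le_rfl]
  · simp only [hsum, List.map_append, List.sum_append, List.map_replicate, List.sum_replicate,
      nsmul_eq_mul]
    rw [sum_map_eq_sum_map_normalizedColoring]
    simp only [normalizedColoring] at hzero ⊢
    linear_combination hzero + (χ 1 - (χ 2 - χ 1)) * hlen' + (χ 2 - χ 1) * hy'

namespace PaddedSolutionFree

section General

variable {k N r : ℕ} {φ ψ : ℕ → ZMod r}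

lemma ne_zero₀ (h : PaddedSolutionFree k N φ ψ) (hk : 2 ≤ k) {y : ℕ} (hlo : k ≤ y + 1)
    (hhi : y + 2 ≤ 2 * k) (hy : y ≤ N) : ψ y ≠ 0 := by
  simpa using h [] (y + 1 - k) (2 * k - 2 - y) y (by simp) (by simp; omega) (by simp; omega)
    (by omega) hy

lemma ne_zero₁ (h : PaddedSolutionFree k N φ ψ) {n y : ℕ} (hn : 1 ≤ n) (hlo : n + k ≤ y + 2)
    (hhi : y + 4 ≤ n + 2 * k) (hy : y ≤ N) : φ n + ψ y ≠ 0 := by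
  simpa using h [n] (y + 2 - n - k) (2 * k + n - 4 - y) y (by simpa) (by simp; omega)
    (by simp; omega) (by omega) hy

lemma ne_zero₂ (h : PaddedSolutionFree k N φ ψ) {n₁ n₂ y : ℕ} (hn₁ : 1 ≤ n₁) (hn₂ : 1 ≤ n₂)
    (hlo : n₁ + n₂ + k ≤ y + 3) (hhi : y + 6 ≤ n₁ + n₂ + 2 * k) (hy : y ≤ N) :
    φ n₁ + φ n₂ + ψ y ≠ 0 := by
  simpa [add_assoc] using h [n₁, n₂] (y + 3 - n₁ - n₂ - k) (2 * k + n₁ + n₂ - 6 - y) y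
    (by simp [*]) (by simp; omega) (by simp; omega) (by omega) hy

lemma ne_zero₃ (h : PaddedSolutionFree k N φ ψ) {n₁ n₂ n₃ y : ℕ} (hn₁ : 1 ≤ n₁) (hn₂ : 1 ≤ n₂)
    (hn₃ : 1 ≤ n₃) (hlo : n₁ + n₂ + n₃ + k ≤ y + 4) (hhi : y + 8 ≤ n₁ + n₂ + n₃ + 2 * k)
    (hy : y ≤ N) : φ n₁ + φ n₂ + φ n₃ + ψ y ≠ 0 := by
  simpa [add_assoc] using h [n₁, n₂, n₃] (y + 4 - n₁ - n₂ - n₃ - k)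
    (2 * k + n₁ + n₂ + n₃ - 8 - y) y (by simp [*]) (by simp; omega) (by simp; omega) (by omega) hy

end General

section ZModFour

variable {k N : ℕ} {φ ψ : ℕ → ZMod 4}

lemma eq_two_of_even (h : PaddedSolutionFree k N φ ψ) (hk : 2 ≤ k) {y : ℕ} (hlo : k ≤ y + 1)
    (hhi : y + 2 ≤ 2 * k) (hy : y ≤ N) (heven : ψ y = 0 ∨ ψ y = 2) : ψ y = 2 :=
  heven.resolve_left (h.ne_zero₀ hk hlo hhi hy)

/-- Trading the summands `s - 1` for `s` one at a time keeps the total and adds the unit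
`ψ s` each time, so the four color sums run through all of `ZMod 4`. -/
lemma false_of_pred_eq_zero_of_odd (h : PaddedSolutionFree k (4 * k - 5) ψ ψ) (hk : 7 ≤ k)
    {s : ℕ} (hs : 2 ≤ s) (hsk : s < k) (hpred : ψ (s - 1) = 0) (hodd : ψ s = 1 ∨ ψ s = 3) :
    False := by
  have h₀ : ψ (3 * s + k - 4) ≠ 0 := by
    simpa [hpred] using h.ne_zero₃ (n₁ := s - 1) (n₂ := s - 1) (n₃ := s - 1)
      (by omega) (by omega) (by omega) (by omega) (by omega) (by omega)
  have h₁ : ψ s + ψ (3 * s + k - 4) ≠ 0 := by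
    simpa [hpred] using h.ne_zero₃ (n₁ := s) (n₂ := s - 1) (n₃ := s - 1)
      (by omega) (by omega) (by omega) (by omega) (by omega) (by omega)
  have h₂ : ψ s + ψ s + ψ (3 * s + k - 4) ≠ 0 := by
    simpa [hpred] using h.ne_zero₃ (n₁ := s) (n₂ := s) (n₃ := s - 1)
      (by omega) (by omega) (by omega) (by omega) (by omega) (by omega)
  exact h₀ (ZMod4.eq_zero_of_odd_of_add_ne_zero hodd h₁ h₂
    (h.ne_zero₃ (by omega) (by omega) (by omega) (by omega) (by omega) (by omega)))

lemma exists_odd_le (h : PaddedSolutionFree k (4 * k - 5) ψ ψ) (hk : 8 ≤ k) :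
    ∃ n, (1 ≤ n ∧ (ψ n = 1 ∨ ψ n = 3)) ∧ n ≤ 2 * k - 3 := by
  by_contra! hno
  have heven : ∀ n, 1 ≤ n → n ≤ 2 * k - 3 → ψ n = 0 ∨ ψ n = 2 := fun n hn hnk =>
    (ZMod4.even_or_odd (ψ n)).resolve_right fun hodd => (hno n ⟨hn, hodd⟩).not_ge hnk
  have h₁ := h.eq_two_of_even (y := k - 1) (by omega) (by omega) (by omega) (by omega)
    (heven _ (by omega) (by omega))
  have h₂ := h.eq_two_of_even (y := 2 * k - 3) (by omega) (by omega) (by omega) (by omega)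
    (heven _ (by omega) (by omega))
  exact h.ne_zero₁ (n := k - 1) (y := 2 * k - 3) (by omega) (by omega) (by omega) (by omega)
    (by rw [h₁, h₂]; decide)

lemma ne_zero_of_first_odd (h : PaddedSolutionFree k (4 * k - 5) ψ ψ) (hk : 8 ≤ k) {s o : ℕ}
    (hs3 : 3 ≤ s) (hsk : s < k) (hs : ψ s = 2) (hso : s < o) (ho : o ≤ 2 * k - 3)
    (hbelow : ∀ n, 1 ≤ n → n < o → ψ n = 0 ∨ ψ n = 2) : ψ (o + 2 * k - 4) ≠ 0 := by
  intro hv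
  rcases hbelow (o - 1) (by omega) (by omega) with hpred | hpred
  · have hok : o ≤ k := by
      by_contra
      exact h.ne_zero₀ (y := o - 1) (by omega) (by omega) (by omega) (by omega) hpred
    exact h.ne_zero₂ (n₁ := o - 1) (n₂ := o - 1) (y := o + 2 * k - 4)
      (by omega) (by omega) (by omega) (by omega) (by omega) (by rw [hpred, hv]; decide)
  · exact h.ne_zero₂ (n₁ := s) (n₂ := o - 1) (y := o + 2 * k - 4)
      (by omega) (by omega) (by omega) (by omega) (by omega) (by rw [hs, hpred, hv]; decide)

lemma ne_two_of_first_odd (h : PaddedSolutionFree k (4 * k - 5) ψ ψ) (hk : 8 ≤ k) {s o : ℕ}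
    (hs3 : 3 ≤ s) (hsk : s < k) (hs : ψ s = 2) (hmin : ∀ n, 1 ≤ n → n < s → ψ n = 0)
    (hso : s < o) (ho : o ≤ 2 * k - 3) (hbelow : ∀ n, 1 ≤ n → n < o → ψ n = 0 ∨ ψ n = 2) :
    ψ (o + 2 * k - 4) ≠ 2 := by
  intro hv
  rcases hbelow (o - 1) (by omega) (by omega) with hpred | hpred
  · exact h.ne_zero₂ (n₁ := s) (n₂ := o - 1) (y := o + 2 * k - 4)
      (by omega) (by omega) (by omega) (by omega) (by omega) (by rw [hs, hpred, hv]; decide)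
  rcases (show 4 ≤ s ∨ s = 3 by omega) with hs4 | rfl
  · exact h.ne_zero₂ (n₁ := o - 1) (n₂ := 3) (y := o + 2 * k - 4)
      (by omega) (by omega) (by omega) (by omega) (by omega)
      (by rw [hpred, hmin 3 (by omega) hs4, hv]; decide)
  have hpk : k ≤ o → ψ (k - 1) = 2 := fun hko =>
    h.eq_two_of_even (by omega) (by omega) (by omega) (by omega)
      (hbelow (k - 1) (by omega) (by omega))
  rcases (show o < k ∨ (k ≤ o ∧ o ≤ k + 1) ∨ k + 1 < o by omega) with hok | hok | hok
  · exact h.ne_zero₃ (n₁ := 3) (n₂ := o - 1) (n₃ := o - 1) (y := o + 2 * k - 4)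
      (by omega) (by omega) (by omega) (by omega) (by omega) (by omega)
      (by rw [hs, hpred, hv]; decide)
  · exact h.ne_zero₃ (n₁ := 3) (n₂ := 3) (n₃ := k - 1) (y := o + 2 * k - 4)
      (by omega) (by omega) (by omega) (by omega) (by omega) (by omega)
      (by rw [hs, hpk (by omega), hv]; decide)
  · exact h.ne_zero₃ (n₁ := 3) (n₂ := k - 1) (n₃ := k - 1) (y := o + 2 * k - 4)
      (by omega) (by omega) (by omega) (by omega) (by omega) (by omega)
      (by rw [hs, hpk (by omega), hv]; decide)

lemma false_of_first_nonzero_eq_two (h : PaddedSolutionFree k (4 * k - 5) ψ ψ) (hk : 8 ≤ k)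
    {s : ℕ} (hs3 : 3 ≤ s) (hsk : s < k) (hs : ψ s = 2) (hmin : ∀ n, 1 ≤ n → n < s → ψ n = 0) :
    False := by
  classical
  obtain ⟨n, hn, hn_le⟩ := h.exists_odd_le hk
  have hex : ∃ n, 1 ≤ n ∧ (ψ n = 1 ∨ ψ n = 3) := ⟨n, hn⟩
  obtain ⟨o, ⟨ho1, hodd⟩, hmin_o, ho_le⟩ : ∃ o, (1 ≤ o ∧ (ψ o = 1 ∨ ψ o = 3)) ∧
      (∀ m < o, ¬(1 ≤ m ∧ (ψ m = 1 ∨ ψ m = 3))) ∧ o ≤ n :=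
    ⟨Nat.find hex, Nat.find_spec hex, fun _ => Nat.find_min hex, Nat.find_min' hex hn⟩
  have hbelow : ∀ m, 1 ≤ m → m < o → ψ m = 0 ∨ ψ m = 2 := fun m hm hmo =>
    (ZMod4.even_or_odd (ψ m)).resolve_right fun hodd => hmin_o m hmo ⟨hm, hodd⟩
  have ho_ne : ψ o ≠ 0 ∧ ψ o ≠ 2 := by rcases hodd with h' | h' <;> rw [h'] <;> decide
  have hso : s < o := lt_of_le_of_ne (le_of_not_gt fun hos => ho_ne.1 (hmin o ho1 hos))
    fun hso => ho_ne.2 (hso ▸ hs)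
  have hψ1 : ψ 1 = 0 := hmin 1 le_rfl (by omega)
  have hwv : ψ o + ψ (o + 2 * k - 4) ≠ 0 :=
    h.ne_zero₁ (by omega) (by omega) (by omega) (by omega)
  have hw2v : ψ o + 2 + ψ (o + 2 * k - 4) ≠ 0 := by
    rcases le_or_gt k o with hko | hok
    · have hpk := h.eq_two_of_even (y := k - 1) (by omega) (by omega) (by omega) (by omega)
        (hbelow (k - 1) (by omega) (by omega))
      simpa [hpk, hψ1] using h.ne_zero₃ (n₁ := o) (n₂ := k - 1) (n₃ := 1)
        (y := o + 2 * k - 4) (by omega) (by omega) le_rfl (by omega) (by omega) (by omega)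
    · simpa [hs, hψ1] using h.ne_zero₃ (n₁ := o) (n₂ := s) (n₃ := 1)
        (y := o + 2 * k - 4) (by omega) (by omega) le_rfl (by omega) (by omega) (by omega)
  have key : ∀ w v : ZMod 4, (w = 1 ∨ w = 3) →
      w + v ≠ 0 → w + 2 + v ≠ 0 → v ≠ 0 → v ≠ 2 → False := by decide
  exact key _ _ hodd hwv hw2v
    (h.ne_zero_of_first_odd hk hs3 hsk hs hso (by omega) hbelow)
    (h.ne_two_of_first_odd hk hs3 hsk hs hmin hso (by omega) hbelow)

theorem false_of_twist_zero (h : PaddedSolutionFree k (4 * k - 5) ψ ψ) (hk : 8 ≤ k)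
    (h1 : ψ 1 = 0) (h2 : ψ 2 = 0) : False := by
  classical
  have hex : ∃ n, 1 ≤ n ∧ ψ n ≠ 0 :=
    ⟨k - 1, by omega, h.ne_zero₀ (by omega) (by omega) (by omega) (by omega)⟩
  obtain ⟨s, ⟨hs1, hs⟩, hmin, hsk⟩ : ∃ s, (1 ≤ s ∧ ψ s ≠ 0) ∧
      (∀ m < s, ¬(1 ≤ m ∧ ψ m ≠ 0)) ∧ s ≤ k - 1 :=
    ⟨Nat.find hex, Nat.find_spec hex, fun _ => Nat.find_min hex,
      Nat.find_min' hex ⟨by omega, h.ne_zero₀ (by omega) (by omega) (by omega) (by omega)⟩⟩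
  have hmin' : ∀ m, 1 ≤ m → m < s → ψ m = 0 := fun m hm hms => not_not.mp fun hne =>
    hmin m hms ⟨hm, hne⟩
  have hs3 : 3 ≤ s := by
    by_contra!
    interval_cases s <;> contradiction
  rcases ZMod4.even_or_odd (ψ s) with (hs0 | hs2) | hodd
  · exact hs hs0
  · exact h.false_of_first_nonzero_eq_two hk hs3 (by omega) hs2 hmin'
  · exact h.false_of_pred_eq_zero_of_odd (by omega) (by omega) (by omega)
      (hmin' (s - 1) (by omega) (by omega)) hodd

lemma false_of_odd_of_eq_zero (h : PaddedSolutionFree k (4 * k - 5) φ ψ) (hk : 8 ≤ k)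
    (hodd : ∀ y, y % 2 = 1 → ψ y = φ y + 2) (hA : φ (k - 1) = 1 ∨ φ (k - 1) = 3)
    (hC : φ (2 * k - 3) = 0) : False := by
  have hP₁ : φ 3 + φ 3 + (φ (2 * k - 3) + 2) ≠ 0 := hodd (2 * k - 3) (by omega) ▸
    h.ne_zero₂ (by omega) (by omega) (by omega) (by omega) (by omega)
  have hP₂ : φ 3 + (φ (2 * k - 3) + 2) ≠ 0 := hodd (2 * k - 3) (by omega) ▸
    h.ne_zero₁ (by omega) (by omega) (by omega) (by omega)
  have hP : φ 3 = 0 := by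
    rw [hC] at hP₁ hP₂
    have key : ∀ P : ZMod 4, P + P + (0 + 2) ≠ 0 → P + (0 + 2) ≠ 0 → P = 0 := by decide
    exact key _ hP₁ hP₂
  have hG₀ : φ (2 * k - 3) + (φ (4 * k - 7) + 2) ≠ 0 := hodd (4 * k - 7) (by omega) ▸
    h.ne_zero₁ (by omega) (by omega) (by omega) (by omega)
  have hG₁ : φ (k - 1) + φ (2 * k - 3) + (φ (4 * k - 7) + 2) ≠ 0 := hodd (4 * k - 7) (by omega) ▸
    h.ne_zero₂ (by omega) (by omega) (by omega) (by omega) (by omega)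
  have hG₂ : φ 3 + φ (k - 1) + φ (k - 1) + (φ (4 * k - 7) + 2) ≠ 0 :=
    hodd (4 * k - 7) (by omega) ▸
      h.ne_zero₃ (by omega) (by omega) (by omega) (by omega) (by omega) (by omega)
  have hG₃ : φ (k - 1) + φ (k - 1) + φ (k - 1) + (φ (4 * k - 7) + 2) ≠ 0 :=
    hodd (4 * k - 7) (by omega) ▸
      h.ne_zero₃ (by omega) (by omega) (by omega) (by omega) (by omega) (by omega)
  rw [hC, zero_add] at hG₀
  rw [hC, add_zero] at hG₁
  rw [hP, zero_add] at hG₂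
  exact hG₀ (ZMod4.eq_zero_of_odd_of_add_ne_zero hA hG₁ hG₂ hG₃)

lemma false_of_odd_of_add_eq_zero (h : PaddedSolutionFree k (4 * k - 5) φ ψ) (hk : 8 ≤ k)
    (hk₂ : Even k) (hodd : ∀ y, y % 2 = 1 → ψ y = φ y + 2) (hA : φ (k - 1) = 1 ∨ φ (k - 1) = 3)
    (hAC : φ (k - 1) + φ (2 * k - 3) = 0) : False := by
  have hk_mod := Nat.even_iff.mp hk₂
  have hC : φ (2 * k - 3) = φ (k - 1) + φ (k - 1) + φ (k - 1) := by
    linear_combination hAC - φ (k - 1) * ZMod.natCast_self 4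
  have hE₁ : φ (k - 1) + (φ (3 * k - 5) + 2) ≠ 0 := hodd (3 * k - 5) (by omega) ▸
    h.ne_zero₁ (by omega) (by omega) (by omega) (by omega)
  have hE₂ : φ (k - 1) + φ (k - 1) + (φ (3 * k - 5) + 2) ≠ 0 := hodd (3 * k - 5) (by omega) ▸
    h.ne_zero₂ (by omega) (by omega) (by omega) (by omega) (by omega)
  have hE₃ : φ (2 * k - 3) + (φ (3 * k - 5) + 2) ≠ 0 := hodd (3 * k - 5) (by omega) ▸
    h.ne_zero₁ (by omega) (by omega) (by omega) (by omega)
  rw [hC] at hE₃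
  have hE : φ (3 * k - 5) = 2 := by
    linear_combination ZMod4.eq_zero_of_odd_of_add_ne_zero hA hE₁ hE₂ hE₃ - ZMod.natCast_self 4
  have hQ₁ : φ (k / 2 + 1) + φ (k / 2 + 1) + (φ (3 * k - 5) + 2) ≠ 0 :=
    hodd (3 * k - 5) (by omega) ▸ h.ne_zero₂ (by omega) (by omega) (by omega) (by omega) (by omega)
  have hQ₂ : φ (k / 2 + 1) + (φ (2 * k - 3) + 2) ≠ 0 :=
    hodd (2 * k - 3) (by omega) ▸ h.ne_zero₁ (by omega) (by omega) (by omega) (by omega)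
  have hH₁ : φ (3 * k - 5) + (φ (4 * k - 5) + 2) ≠ 0 :=
    hodd (4 * k - 5) (by omega) ▸ h.ne_zero₁ (by omega) (by omega) (by omega) (by omega)
  have hH₂ : φ (k / 2 + 1) + φ (k / 2 + 1) + φ (2 * k - 3) + (φ (4 * k - 5) + 2) ≠ 0 :=
    hodd (4 * k - 5) (by omega) ▸
      h.ne_zero₃ (by omega) (by omega) (by omega) (by omega) (by omega) (by omega)
  have hH₃ : φ (k / 2 + 1) + φ (2 * k - 3) + (φ (4 * k - 5) + 2) ≠ 0 :=
    hodd (4 * k - 5) (by omega) ▸ h.ne_zero₂ (by omega) (by omega) (by omega) (by omega) (by omega)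
  have hH₄ : φ (k / 2 + 1) + φ (k - 1) + φ (k - 1) + (φ (4 * k - 5) + 2) ≠ 0 :=
    hodd (4 * k - 5) (by omega) ▸
      h.ne_zero₃ (by omega) (by omega) (by omega) (by omega) (by omega) (by omega)
  rw [hE] at hQ₁ hH₁
  rw [hC] at hQ₂ hH₂ hH₃
  have key : ∀ A Q H : ZMod 4, (A = 1 ∨ A = 3) → Q + Q + (2 + 2) ≠ 0 →
      Q + (A + A + A + 2) ≠ 0 → 2 + (H + 2) ≠ 0 → Q + Q + (A + A + A) + (H + 2) ≠ 0 →
      Q + (A + A + A) + (H + 2) ≠ 0 → Q + A + A + (H + 2) ≠ 0 → False := by decide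
  exact key _ _ _ hA hQ₁ hQ₂ hH₁ hH₂ hH₃ hH₄

lemma false_of_zero_of_odd (h : PaddedSolutionFree k (4 * k - 5) φ ψ) (hk : 8 ≤ k)
    (hk₂ : Even k) (hodd : ∀ y, y % 2 = 1 → ψ y = φ y + 2) (hA : φ (k - 1) = 0)
    (hB : φ k = 1 ∨ φ k = 3) : False := by
  have hk_mod := Nat.even_iff.mp hk₂
  have hF₁ : φ k + φ k + (φ (3 * k - 3) + 2) ≠ 0 := hodd (3 * k - 3) (by omega) ▸
    h.ne_zero₂ (by omega) (by omega) (by omega) (by omega) (by omega)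
  have hF₂ : φ (k - 1) + φ k + (φ (3 * k - 3) + 2) ≠ 0 := hodd (3 * k - 3) (by omega) ▸
    h.ne_zero₂ (by omega) (by omega) (by omega) (by omega) (by omega)
  have hF₃ : φ (k - 1) + φ (k - 1) + (φ (3 * k - 3) + 2) ≠ 0 := hodd (3 * k - 3) (by omega) ▸
    h.ne_zero₂ (by omega) (by omega) (by omega) (by omega) (by omega)
  have hH₁ : φ (k - 1) + φ k + φ k + (φ (4 * k - 5) + 2) ≠ 0 := hodd (4 * k - 5) (by omega) ▸
    h.ne_zero₃ (by omega) (by omega) (by omega) (by omega) (by omega) (by omega)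
  have hH₂ : φ (k - 1) + φ (k - 1) + φ k + (φ (4 * k - 5) + 2) ≠ 0 :=
    hodd (4 * k - 5) (by omega) ▸
      h.ne_zero₃ (by omega) (by omega) (by omega) (by omega) (by omega) (by omega)
  have hH₃ : φ (k - 1) + φ (k - 1) + φ (k - 1) + (φ (4 * k - 5) + 2) ≠ 0 :=
    hodd (4 * k - 5) (by omega) ▸
      h.ne_zero₃ (by omega) (by omega) (by omega) (by omega) (by omega) (by omega)
  have hH₄ : φ (3 * k - 3) + (φ (4 * k - 5) + 2) ≠ 0 := hodd (4 * k - 5) (by omega) ▸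
    h.ne_zero₁ (by omega) (by omega) (by omega) (by omega)
  simp only [hA, zero_add] at hF₂ hF₃ hH₁ hH₂ hH₃
  have key : ∀ B F H : ZMod 4, (B = 1 ∨ B = 3) →
      B + B + (F + 2) ≠ 0 → B + (F + 2) ≠ 0 → F + 2 ≠ 0 →
      B + B + (H + 2) ≠ 0 → B + (H + 2) ≠ 0 → H + 2 ≠ 0 → F + (H + 2) ≠ 0 → False := by
    set_option synthInstance.maxSize 256 in decide
  exact key _ _ _ hB hF₁ hF₂ hF₃ hH₁ hH₂ hH₃ hH₄

lemma false_of_zero_of_eq_two (h : PaddedSolutionFree k (4 * k - 5) φ ψ) (hk : 8 ≤ k)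
    (hodd : ∀ y, y % 2 = 1 → ψ y = φ y + 2) (heven : ∀ y, y % 2 = 0 → ψ y = φ y)
    (hA : φ (k - 1) = 0) (hB : φ k = 2) : False := by
  have hD₁ : φ (2 * k - 2) ≠ 0 := heven (2 * k - 2) (by omega) ▸
    h.ne_zero₀ (by omega) (by omega) (by omega) (by omega)
  have hD₂ : φ k + φ (2 * k - 2) ≠ 0 := heven (2 * k - 2) (by omega) ▸
    h.ne_zero₁ (by omega) (by omega) (by omega) (by omega)
  have hH₁ : φ (k - 1) + φ (k - 1) + φ k + (φ (4 * k - 5) + 2) ≠ 0 :=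
    hodd (4 * k - 5) (by omega) ▸
      h.ne_zero₃ (by omega) (by omega) (by omega) (by omega) (by omega) (by omega)
  have hH₂ : φ (k - 1) + φ (k - 1) + φ (k - 1) + (φ (4 * k - 5) + 2) ≠ 0 :=
    hodd (4 * k - 5) (by omega) ▸
      h.ne_zero₃ (by omega) (by omega) (by omega) (by omega) (by omega) (by omega)
  have hH₃ : φ (k - 1) + φ (2 * k - 2) + (φ (4 * k - 5) + 2) ≠ 0 :=
    hodd (4 * k - 5) (by omega) ▸
      h.ne_zero₂ (by omega) (by omega) (by omega) (by omega) (by omega)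
  have hH₄ : φ k + φ (2 * k - 2) + (φ (4 * k - 5) + 2) ≠ 0 := hodd (4 * k - 5) (by omega) ▸
    h.ne_zero₂ (by omega) (by omega) (by omega) (by omega) (by omega)
  simp only [hA, hB, zero_add] at hD₂ hH₁ hH₂ hH₃ hH₄
  have key : ∀ D H : ZMod 4, D ≠ 0 → 2 + D ≠ 0 → 2 + (H + 2) ≠ 0 → H + 2 ≠ 0 →
      D + (H + 2) ≠ 0 → 2 + D + (H + 2) ≠ 0 → False := by
    decide
  exact key _ _ hD₁ hD₂ hH₁ hH₂ hH₃ hH₄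

theorem false_of_twist_two (h : PaddedSolutionFree k (4 * k - 5) φ (fun y => φ y + y * 2))
    (hk : 8 ≤ k) (hk₂ : Even k) : False := by
  have hodd : ∀ y, y % 2 = 1 → φ y + y * 2 = φ y + 2 := fun y hy => by
    obtain ⟨t, rfl⟩ : ∃ t, y = 2 * t + 1 := ⟨y / 2, by omega⟩
    push_cast
    linear_combination (t : ZMod 4) * ZMod.natCast_self 4
  have heven : ∀ y, y % 2 = 0 → φ y + y * 2 = φ y := fun y hy => by
    obtain ⟨t, rfl⟩ : ∃ t, y = 2 * t := ⟨y / 2, by omega⟩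
    push_cast
    linear_combination (t : ZMod 4) * ZMod.natCast_self 4
  have hk_mod := Nat.even_iff.mp hk₂
  have hA : φ (k - 1) + 2 ≠ 0 := hodd (k - 1) (by omega) ▸
    h.ne_zero₀ (by omega) (by omega) (by omega) (by omega)
  have hB : φ k ≠ 0 := heven k (by omega) ▸
    h.ne_zero₀ (by omega) (by omega) (by omega) (by omega)
  rcases ZMod4.even_or_odd (φ (k - 1)) with (hA₀ | hA₂) | hA_odd
  · rcases ZMod4.even_or_odd (φ k) with (hB₀ | hB₂) | hB_odd
    · exact hB hB₀
    · exact h.false_of_zero_of_eq_two hk hodd heven hA₀ hB₂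
    · exact h.false_of_zero_of_odd hk hk₂ hodd hA₀ hB_odd
  · exact hA (by rw [hA₂]; decide)
  · have hC₀ : φ (2 * k - 3) + 2 ≠ 0 := hodd (2 * k - 3) (by omega) ▸
      h.ne_zero₀ (by omega) (by omega) (by omega) (by omega)
    have hC₁ : φ (k - 1) + (φ (2 * k - 3) + 2) ≠ 0 := hodd (2 * k - 3) (by omega) ▸
      h.ne_zero₁ (by omega) (by omega) (by omega) (by omega)
    have key : ∀ A C : ZMod 4, (A = 1 ∨ A = 3) → C + 2 ≠ 0 → A + (C + 2) ≠ 0 →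
        C = 0 ∨ A + C = 0 := by
      decide
    rcases key _ _ hA_odd hC₀ hC₁ with hC | hAC
    · exact h.false_of_odd_of_eq_zero hk hodd hA_odd hC
    · exact h.false_of_odd_of_add_eq_zero hk hk₂ hodd hA_odd hAC

end ZModFour

end PaddedSolutionFree

theorem zero_sum_schur_upper_four (k : ℕ) (hdvd : 4 ∣ k) (hk : 8 ≤ k)
    (χ : ℕ → ZMod 4) :
    hasZeroSumSolution k 4 (4 * k - 5) χ := by
  by_contra hχ
  have h := paddedSolutionFree_normalizedColoring ((ZMod.natCast_eq_zero_iff k 4).mpr hdvd) hχ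
  rcases ZMod4.two_mul_eq_zero_or_eq_two (χ 2 - χ 1) with htwist | htwist <;>
    rw [htwist] at h
  · simp only [mul_zero, add_zero] at h
    exact h.false_of_twist_zero hk (normalizedColoring_one χ) (normalizedColoring_two χ)
  · exact h.false_of_twist_two hk
      (even_iff_two_dvd.mpr (dvd_trans (by norm_num) hdvd))
end

section
/- Let r ≥ 1 be odd and let k ≥ 2 be an integer. Then there exists a coloring χ : {1,…,kr−r−1} → ℤ/rℤ that admits no r-zero-sum solution to the equation E; equivalently, S_z(k,r) ≥ kr − r. -/
open Finset

theorem Finset.sum_ite_neg_eq_sub_two_mul {ι R : Type*} [CommRing R] (s : Finset ι)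
    (p : ι → Prop) [DecidablePred p] (f : ι → R) :
    ∑ i ∈ s, (if p i then -f i else f i) = ∑ i ∈ s, f i - 2 * ∑ i ∈ s with p i, f i := by
  rw [sum_ite, sum_neg_distrib, ← sum_filter_add_sum_filter_not s p f]
  ring

theorem ZMod.isUnit_two_of_odd {r : ℕ} (hodd : Odd r) : IsUnit (2 : ZMod r) := by
  rw [← Nat.cast_ofNat, ZMod.isUnit_iff_coprime]
  exact Nat.coprime_two_left.mpr hodd

theorem Nat.add_le_mul_of_dvd_of_lt_mul {r a b : ℕ} (hdvd : r ∣ a) (hlt : a < r * b) :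
    a + r ≤ r * b := by
  obtain ⟨j, rfl⟩ := hdvd
  calc r * j + r = r * (j + 1) := by ring
    _ ≤ r * b := Nat.mul_le_mul_left r (Nat.lt_of_mul_lt_mul_left hlt)

theorem Nat.add_le_mul_add_of_natCast_eq {r s t c : ℕ} (hc : 0 < c) (hcr : c ≤ r)
    (hs : s ≤ r * t) (hsc : (s : ZMod r) = c) : s + r ≤ r * t + c := by
  have hdvd : r ∣ s + (r - c) := by
    rw [← ZMod.natCast_eq_zero_iff, Nat.cast_add, Nat.cast_sub hcr, hsc, ZMod.natCast_self]
    ring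
  have := Nat.add_le_mul_of_dvd_of_lt_mul (b := t + 1) hdvd (by rw [mul_add]; omega)
  rw [mul_add] at this
  omega

theorem sub_one_le_of_hasZeroSumSolution {k r N : ℕ} {χ : ℕ → ZMod r}
    (h : hasZeroSumSolution k r N χ) : k - 1 ≤ N := by
  obtain ⟨x, y, hx, ⟨-, hyN⟩, rfl, -⟩ := h
  calc k - 1 = ∑ _i : Fin (k - 1), 1 := by simp
    _ ≤ ∑ i, x i := sum_le_sum fun i _ => (hx i).1
    _ ≤ N := hyN

theorem not_hasZeroSumSolution_const_one {k r N : ℕ} (hk : 1 ≤ k) (hrk : ¬ r ∣ k) :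
    ¬ hasZeroSumSolution k r N (fun _ => 1) := by
  rintro ⟨x, y, -, -, -, hzero⟩
  apply hrk
  rw [← ZMod.natCast_eq_zero_iff, ← Nat.sub_add_cancel hk, ← hzero]
  simp

namespace ZeroSumSchur

def residue (r z : ℕ) : ℕ := (z - 1) % r

def IsLarge (n r z : ℕ) : Prop := r * n ≤ z - 1 + n * residue r z

instance (n r : ℕ) : DecidablePred (IsLarge n r) := fun _ => inferInstanceAs (Decidable (_ ≤ _))

def signedResidueColoring (n r : ℕ) (z : ℕ) : ZMod r :=
  if IsLarge n r z then -(residue r z : ZMod r) else residue r z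

variable {n r : ℕ}

theorem residue_lt (hr : 0 < r) (z : ℕ) : residue r z < r := Nat.mod_lt _ hr

theorem natCast_eq_one_add_residue {z : ℕ} (hz : 1 ≤ z) : (z : ZMod r) = 1 + residue r z := by
  rw [residue, ZMod.natCast_mod, ← Nat.cast_one, ← Nat.cast_add, Nat.add_sub_cancel' hz]

theorem dvd_sub_one_add_mul_residue (hrn : r ∣ n + 1) (z : ℕ) :
    r ∣ z - 1 + n * residue r z := by
  have hn : ((n + 1 : ℕ) : ZMod r) = 0 := (ZMod.natCast_eq_zero_iff _ _).mpr hrn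
  rw [← ZMod.natCast_eq_zero_iff, Nat.cast_add, Nat.cast_mul, ← ZMod.natCast_mod (z - 1)]
  push_cast at hn
  rw [residue]
  linear_combination ((z - 1) % r : ℕ) * hn

theorem natCast_sum_residue_isLarge_eq (hodd : Odd r) (hrn : r ∣ n + 1) (x : Fin n → ℕ)
    (hx : ∀ i, 1 ≤ x i) (hy : 1 ≤ ∑ i, x i)
    (hzero : ∑ i, signedResidueColoring n r (x i) + signedResidueColoring n r (∑ i, x i) = 0) :
    ((∑ i with IsLarge n r (x i), residue r (x i) : ℕ) : ZMod r) =
      ((if IsLarge n r (∑ i, x i) then 1 else residue r (∑ i, x i) + 1 : ℕ) : ZMod r) := by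
  have hn : (n : ZMod r) + 1 = 0 := by exact_mod_cast (ZMod.natCast_eq_zero_iff _ _).mpr hrn
  have hsum : (1 + residue r (∑ i, x i) : ZMod r) = n + ∑ i, (residue r (x i) : ZMod r) := by
    rw [← natCast_eq_one_add_residue hy, Nat.cast_sum]
    simp [natCast_eq_one_add_residue (hx _), sum_add_distrib]
  simp only [signedResidueColoring, Finset.sum_ite_neg_eq_sub_two_mul] at hzero
  apply (ZMod.isUnit_two_of_odd hodd).mul_left_cancel
  push_cast
  split_ifs at hzero ⊢
  · linear_combination -hzero - hsum - hn
  · linear_combination -hzero - hsum - hn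

theorem mul_card_isLarge_add_le (x : Fin n → ℕ) (hx : ∀ i, 1 ≤ x i) :
    r * n * #{i | IsLarge n r (x i)} + n ≤
      ∑ i, x i + n * ∑ i with IsLarge n r (x i), residue r (x i) := by
  have hlarge := card_nsmul_le_sum {i | IsLarge n r (x i)}
    (fun i => x i - 1 + n * residue r (x i)) (r * n) fun i hi => (mem_filter.mp hi).2
  rw [smul_eq_mul, mul_comm] at hlarge
  have hsum : ∑ i, x i = ∑ i, (x i - 1) + n := by
    rw [← sum_congr rfl fun i _ => Nat.sub_add_cancel (hx i)]
    simp [sum_add_distrib]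
  calc r * n * #{i | IsLarge n r (x i)} + n
      ≤ ∑ i with IsLarge n r (x i), (x i - 1 + n * residue r (x i)) + n := by omega
    _ = ∑ i with IsLarge n r (x i), (x i - 1) + n * ∑ i with IsLarge n r (x i), residue r (x i)
        + n := by rw [sum_add_distrib, mul_sum]
    _ ≤ ∑ i, (x i - 1) + n * ∑ i with IsLarge n r (x i), residue r (x i) + n := by
        gcongr
        exact filter_subset _ _
    _ = ∑ i, x i + n * ∑ i with IsLarge n r (x i), residue r (x i) := by omega

theorem mul_le_of_signedResidueColoring_zero_sum (hr : 1 < r) (hodd : Odd r) (hrn : r ∣ n + 1)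
    {x : Fin n → ℕ} {y : ℕ} (hx : ∀ i, 1 ≤ x i) (hy : 1 ≤ y) (hxy : ∑ i, x i = y)
    (hzero : ∑ i, signedResidueColoring n r (x i) + signedResidueColoring n r y = 0) :
    n * r ≤ y := by
  subst hxy
  have hρ := residue_lt (by omega : 0 < r) (∑ i, x i)
  have hS : ∑ i with IsLarge n r (x i), residue r (x i) ≤ r * #{i | IsLarge n r (x i)} := by
    simpa [mul_comm] using sum_le_card_nsmul _ _ r fun i _ => (residue_lt (by omega) (x i)).le
  have hround := Nat.add_le_mul_add_of_natCast_eq (by split_ifs <;> omega)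
    (by split_ifs <;> omega) hS (natCast_sum_residue_isLarge_eq hodd hrn x hx hy hzero)
  have hcount := mul_card_isLarge_add_le (r := r) x hx
  have key := Nat.mul_le_mul_left n hround
  split_ifs at key with hlarge
  · linarith
  · have hsmall := Nat.add_le_mul_of_dvd_of_lt_mul (dvd_sub_one_add_mul_residue hrn (∑ i, x i))
      (not_le.mp hlarge)
    have : r * n ≤ ∑ i, x i + n * residue r (∑ i, x i) := by linarith
    omega

theorem not_hasZeroSumSolution_signedResidueColoring (hr : 1 < r) (hodd : Odd r)
    (hrn : r ∣ n + 1) :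
    ¬ hasZeroSumSolution (n + 1) r (n * r - 1) (signedResidueColoring n r) := by
  rintro ⟨x, y, hx, ⟨hy, hyN⟩, hxy, hzero⟩
  have := mul_le_of_signedResidueColoring_zero_sum (n := n) hr hodd hrn (fun i => (hx i).1) hy
    hxy hzero
  omega

end ZeroSumSchur

theorem zero_sum_schur_lower_odd_general (r k : ℕ) (hodd : Odd r) (hk : 2 ≤ k) :
    ∃ χ : ℕ → ZMod r, ¬ hasZeroSumSolution k r (k * r - r - 1) χ := by
  by_cases hrk : r ∣ k
  · obtain ⟨n, rfl⟩ : ∃ n, k = n + 1 := ⟨k - 1, by omega⟩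
    rw [add_mul, one_mul, Nat.add_sub_cancel]
    obtain rfl | hr := (show 1 ≤ r from hodd.pos).eq_or_lt
    · exact ⟨0, fun h => by have := sub_one_le_of_hasZeroSumSolution h; omega⟩
    · exact ⟨_, ZeroSumSchur.not_hasZeroSumSolution_signedResidueColoring hr hodd hrk⟩
  · exact ⟨_, not_hasZeroSumSolution_const_one (by omega) hrk⟩

theorem zero_sum_schur_lower_odd (r k : ℕ) (hr1 : 1 ≤ r) (hodd : Odd r) (hk : 2 ≤ k) :
    ∃ χ : ℕ → ZMod r, ¬ hasZeroSumSolution k r (k * r - r - 1) χ :=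
  zero_sum_schur_lower_odd_general r k hodd hk
end

section
/- Let r be an odd prime and let k be a multiple of r with k > r. Then every coloring χ : {1,…,kr−r} → ℤ/rℤ admits an r-zero-sum solution to the equation E, and there exists a coloring χ : {1,…,kr−r−1} → ℤ/rℤ that admits no r-zero-sum solution to E; equivalently, S_z(k,r) = kr − r. -/
private lemma sum_ite_range {M : Type*} [AddCommMonoid M] (n a b c : ℕ) (A B C D : M)
    (hab : a ≤ b) (hbc : b ≤ c) (hcn : c ≤ n) :
    (∑ i ∈ Finset.range n,
      (if i < a then A else if i < b then B else if i < c then C else D))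
      = a • A + (b - a) • B + (c - b) • C + (n - c) • D := by
  have han : a ≤ n := le_trans hab (le_trans hbc hcn)
  have hbn : b ≤ n := le_trans hbc hcn
  rw [Finset.range_eq_Ico,
    ← Finset.sum_Ico_consecutive _ (Nat.zero_le a) han,
    ← Finset.sum_Ico_consecutive _ hab hbn,
    ← Finset.sum_Ico_consecutive _ hbc hcn]
  have h1 : (∑ i ∈ Finset.Ico 0 a,
      (if i < a then A else if i < b then B else if i < c then C else D)) = a • A := by
    rw [Finset.sum_congr rfl (fun i hi => ?_), Finset.sum_const, Nat.card_Ico, Nat.sub_zero]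
    rw [Finset.mem_Ico] at hi
    rw [if_pos hi.2]
  have h2 : (∑ i ∈ Finset.Ico a b,
      (if i < a then A else if i < b then B else if i < c then C else D)) = (b - a) • B := by
    rw [Finset.sum_congr rfl (fun i hi => ?_), Finset.sum_const, Nat.card_Ico]
    rw [Finset.mem_Ico] at hi
    rw [if_neg (not_lt.mpr hi.1), if_pos hi.2]
  have h3 : (∑ i ∈ Finset.Ico b c,
      (if i < a then A else if i < b then B else if i < c then C else D)) = (c - b) • C := by
    rw [Finset.sum_congr rfl (fun i hi => ?_), Finset.sum_const, Nat.card_Ico]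
    rw [Finset.mem_Ico] at hi
    rw [if_neg (not_lt.mpr (le_trans hab hi.1)), if_neg (not_lt.mpr hi.1), if_pos hi.2]
  have h4 : (∑ i ∈ Finset.Ico c n,
      (if i < a then A else if i < b then B else if i < c then C else D)) = (n - c) • D := by
    rw [Finset.sum_congr rfl (fun i hi => ?_), Finset.sum_const, Nat.card_Ico]
    rw [Finset.mem_Ico] at hi
    rw [if_neg (not_lt.mpr (le_trans (le_trans hab hbc) hi.1)),
      if_neg (not_lt.mpr (le_trans hbc hi.1)), if_neg (not_lt.mpr hi.1)]
  rw [h1, h2, h3, h4]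
  abel

theorem zero_sum_schur_eq_prime (r k : ℕ) (hrp : r.Prime) (hodd : Odd r)
    (hdvd : r ∣ k) (hk : r < k) :
    (∀ χ : ℕ → ZMod r, hasZeroSumSolution k r (k * r - r) χ) ∧
    (∃ χ : ℕ → ZMod r, ¬ hasZeroSumSolution k r (k * r - r - 1) χ) := by
  classical
  haveI : Fact r.Prime := ⟨hrp⟩
  haveI : NeZero r := ⟨hrp.pos.ne'⟩
  have hr2 : 2 ≤ r := hrp.two_le
  have hr3 : 3 ≤ r := by
    obtain ⟨s, hs⟩ := hodd
    omega
  have hk2r : 2 * r ≤ k := by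
    obtain ⟨m, hm⟩ := hdvd
    have hm2 : 2 ≤ m := by
      by_contra h
      interval_cases m <;> omega
    calc 2 * r = r * 2 := by ring
    _ ≤ r * m := Nat.mul_le_mul_left r hm2
    _ = k := hm.symm
  have hk1 : 1 ≤ k := by omega
  set n := k - 1 with hn
  have hn5 : 5 ≤ n := by omega
  have hn0 : 0 < n := by omega
  have hkrn : k * r = r * n + r := by
    calc k * r = r * k := by ring
    _ = r * (n + 1) := by rw [hn]; congr 1; omega
    _ = r * n + r := by ring
  have hNrn : k * r - r = r * n := by omega
  -- cast facts
  have hk0 : ((k : ℕ) : ZMod r) = 0 := by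
    obtain ⟨m, hm⟩ := hdvd
    rw [hm]
    push_cast
    simp [ZMod.natCast_self]
  have hn1 : ((n : ℕ) : ZMod r) = -1 := by
    rw [hn, Nat.cast_sub hk1, Nat.cast_one, hk0]
    ring
  have hr1 : ((r - 1 : ℕ) : ZMod r) = -1 := by
    rw [Nat.cast_sub (by omega : 1 ≤ r), Nat.cast_one, ZMod.natCast_self]
    ring
  have h2ne : (2 : ZMod r) ≠ 0 := by
    intro h
    have : ((2 : ℕ) : ZMod r) = 0 := by push_cast; exact h
    rw [ZMod.natCast_eq_zero_iff] at this
    have := Nat.le_of_dvd (by norm_num) this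
    omega
  constructor
  · -- Upper bound: every coloring of [1, r(k-1)] has a zero-sum solution
    intro χ
    set c : ZMod r := χ 2 - χ 1 with hc
    have hkN : k ≤ k * r - r := by
      have h1 : k * 3 ≤ k * r := Nat.mul_le_mul_left k hr3
      have h2 : k + r ≤ k * 3 := by omega
      omega
    by_cases haff : ∀ v : ℕ, 2 ≤ v → v ≤ k → χ v = χ 1 + ((v : ZMod r) - 1) * c
    · -- affine case: (k-2) ones and one 2, y = k
      refine ⟨fun i => if (i : ℕ) < 1 then 2 else if (i : ℕ) < 1 then 1 else
          if (i : ℕ) < 1 then 1 else 1, k, ?_, ⟨by omega, hkN⟩, ?_, ?_⟩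
      · intro i
        dsimp only
        split_ifs <;> constructor <;> omega
      · rw [Fin.sum_univ_eq_sum_range (fun j => if j < 1 then 2 else if j < 1 then 1 else
          if j < 1 then 1 else 1) n,
          sum_ite_range n 1 1 1 2 1 1 1 le_rfl le_rfl (by omega)]
        simp only [smul_eq_mul]
        omega
      · rw [Fin.sum_univ_eq_sum_range (fun j => χ (if j < 1 then 2 else if j < 1 then 1 else
          if j < 1 then 1 else 1)) n]
        simp only [apply_ite χ]
        rw [sum_ite_range n 1 1 1 (χ 2) (χ 1) (χ 1) (χ 1) le_rfl le_rfl (by omega)]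
        have hχ2 : χ 2 = χ 1 + c := by rw [hc]; ring
        have hχk : χ k = χ 1 - c := by
          rw [haff k (by omega) le_rfl, hk0]
          ring
        have hcast : ((n - 1 : ℕ) : ZMod r) = -2 := by
          rw [Nat.cast_sub (by omega : 1 ≤ n), hn1, Nat.cast_one]
          ring
        rw [hχ2, hχk]
        simp only [Nat.sub_self, zero_smul, one_smul, nsmul_eq_mul, hcast]
        ring
    · -- non-affine case
      push_neg at haff
      have hex : ∃ v : ℕ, 2 ≤ v ∧ v ≤ k ∧ χ v ≠ χ 1 + ((v : ZMod r) - 1) * c := by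
        obtain ⟨v, h1, h2, h3⟩ := haff
        exact ⟨v, h1, h2, h3⟩
      have hspec := Nat.find_spec hex
      set v₀ := Nat.find hex with hv₀
      obtain ⟨hv2, hvk, hvne⟩ := hspec
      have hv3 : 3 ≤ v₀ := by
        rcases Nat.lt_or_ge v₀ 3 with h | h
        · exfalso
          have : v₀ = 2 := by omega
          apply hvne
          rw [this]
          push_cast
          rw [hc]
          ring
        · exact h
      set w := v₀ - 1 with hw
      have hw2 : 2 ≤ w := by omega
      have hwn : w ≤ n := by omega
      have hχw : χ w = χ 1 + ((w : ZMod r) - 1) * c := by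
        have hwlt : w < Nat.find hex := by rw [← hv₀]; omega
        have hmin := Nat.find_min hex hwlt
        by_contra hne
        exact hmin ⟨by omega, by omega, hne⟩
      set Δ : ZMod r := χ v₀ - (χ 1 + ((v₀ : ZMod r) - 1) * c) with hΔdef
      have hΔ : Δ ≠ 0 := sub_ne_zero.mpr hvne
      set y := (r - 1) * w + n with hy
      set t := ((χ 1 + (w : ZMod r) * c - χ y) * Δ⁻¹).val with ht
      have htr : t < r := ZMod.val_lt _
      set s := r - 1 - t with hs
      have hts : t + s = r - 1 := by omega
      have hcn : t + s + s ≤ n := by omega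
      set q := n - (t + s + s) with hq
      have hnq : n = t + s + s + q := by omega
      have hyN : y ≤ k * r - r := by
        rw [hNrn, hy]
        have : (r - 1) * w ≤ (r - 1) * n := Nat.mul_le_mul_left _ hwn
        have hrn : (r - 1) * n + n = r * n := by
          have : r - 1 + 1 = r := by omega
          calc (r - 1) * n + n = (r - 1 + 1) * n := by ring
          _ = r * n := by rw [this]
        omega
      refine ⟨fun i => if (i : ℕ) < t then w + 1 else if (i : ℕ) < t + s then w else
          if (i : ℕ) < t + s + s then 2 else 1, y, ?_, ⟨by omega, hyN⟩, ?_, ?_⟩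
      · intro i
        have hwk : w + 1 ≤ k := by omega
        dsimp only
        split_ifs <;> constructor <;> omega
      · rw [Fin.sum_univ_eq_sum_range (fun j => if j < t then w + 1 else if j < t + s then w else
          if j < t + s + s then 2 else 1) n,
          sum_ite_range n t (t + s) (t + s + s) (w + 1) w 2 1 (by omega) (by omega) hcn]
        simp only [smul_eq_mul]
        have e1 : t + s - t = s := by omega
        have e2 : t + s + s - (t + s) = s := by omega
        rw [e1, e2, hy, ← hts]
        have : n - (t + s + s) = q := rfl
        rw [this]
        calc t * (w + 1) + s * w + s * 2 + q * 1 = (t + s) * w + (t + s + s + q) := by ring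
        _ = (t + s) * w + n := by rw [← hnq]
      · rw [Fin.sum_univ_eq_sum_range (fun j => χ (if j < t then w + 1 else if j < t + s then w
          else if j < t + s + s then 2 else 1)) n]
        simp only [apply_ite χ]
        rw [sum_ite_range n t (t + s) (t + s + s) (χ (w + 1)) (χ w) (χ 2) (χ 1)
          (by omega) (by omega) hcn]
        have e1 : t + s - t = s := by omega
        have e2 : t + s + s - (t + s) = s := by omega
        have e3 : n - (t + s + s) = q := rfl
        rw [e1, e2, e3]
        have hχv : χ (w + 1) = χ 1 + (w : ZMod r) * c + Δ := by
          have hvw : v₀ = w + 1 := by omega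
          have hcast : ((v₀ : ℕ) : ZMod r) = (w : ZMod r) + 1 := by
            rw [hvw]; push_cast; ring
          rw [← hvw, hΔdef, hcast]
          ring
        have hχ2 : χ 2 = χ 1 + c := by rw [hc]; ring
        have htΔ : (t : ZMod r) * Δ = χ 1 + (w : ZMod r) * c - χ y := by
          rw [ht, ZMod.natCast_zmod_val, mul_assoc, inv_mul_cancel₀ hΔ, mul_one]
        have htscast : (t : ZMod r) + (s : ZMod r) = -1 := by
          have : ((t + s : ℕ) : ZMod r) = ((r - 1 : ℕ) : ZMod r) := by rw [hts]
          push_cast at this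
          rw [this, hr1]
        have hqcast : (q : ZMod r) = -1 - (t : ZMod r) - (s : ZMod r) - (s : ZMod r) := by
          have : ((t + s + s + q : ℕ) : ZMod r) = ((n : ℕ) : ZMod r) := by rw [← hnq]
          push_cast at this
          rw [hn1] at this
          linear_combination this
        rw [hχv, hχ2, hχw]
        simp only [nsmul_eq_mul]
        rw [hqcast]
        linear_combination htΔ + ((w : ZMod r) * c) * htscast
  · -- Lower bound: explicit coloring of [1, r(k-1)-1] with no zero-sum solution
    set N' := k * r - r - 1 with hN'
    have hN'rn : N' = r * n - 1 := by omega
    set u : ℕ → ℕ := fun v => (-(v : ZMod r)).val with hu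
    have hucast : ∀ v : ℕ, ((u v : ℕ) : ZMod r) = -(v : ZMod r) := by
      intro v
      rw [hu]
      exact ZMod.natCast_zmod_val _
    have hulr : ∀ v : ℕ, u v < r := fun v => ZMod.val_lt _
    set χ : ℕ → ZMod r := fun v =>
      if u v < (v - 1) / n then -(((v - 1 : ℕ)) : ZMod r) else ((v - 1 : ℕ) : ZMod r) with hχ
    refine ⟨χ, ?_⟩
    rintro ⟨x, y, hx, ⟨hy1, hy2⟩, hsum, hzero⟩
    -- step A : ∑ (x i - 1) = y - n
    have hcard : (Finset.univ : Finset (Fin (k - 1))).card = n := by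
      rw [Finset.card_univ, Fintype.card_fin]
    have hyn : (∑ i, (x i - 1)) + n = y := by
      have h1 : ∑ i : Fin (k - 1), ((x i - 1) + 1) = ∑ i : Fin (k - 1), x i :=
        Finset.sum_congr rfl (fun i _ => Nat.sub_add_cancel (hx i).1)
      rw [Finset.sum_add_distrib] at h1
      simp only [Finset.sum_const, hcard, smul_eq_mul, mul_one] at h1
      rw [h1, hsum]
    have hny : n ≤ y := by omega
    -- step B : budget
    set F : Finset (Fin (k - 1)) := Finset.univ.filter (fun i => u (x i) < (x i - 1) / n)
      with hF
    set Q := ∑ i ∈ F, (u (x i) + 1) with hQ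
    have hQn : Q * n + n ≤ y := by
      have h1 : ∀ i ∈ F, (u (x i) + 1) * n ≤ x i - 1 := by
        intro i hi
        rw [hF, Finset.mem_filter] at hi
        have : u (x i) + 1 ≤ (x i - 1) / n := hi.2
        exact (Nat.le_div_iff_mul_le hn0).mp this
      have h2 : Q * n ≤ ∑ i ∈ F, (x i - 1) := by
        rw [hQ, Finset.sum_mul]
        exact Finset.sum_le_sum h1
      have h3 : ∑ i ∈ F, (x i - 1) ≤ ∑ i, (x i - 1) :=
        Finset.sum_le_sum_of_subset (Finset.subset_univ F)
      omega
    have hQr : Q + 1 < r := by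
      have hyN : y ≤ r * n - 1 := by omega
      have : (Q + 1) * n < r * n := by
        calc (Q + 1) * n = Q * n + n := by ring
        _ ≤ y := hQn
        _ < r * n := by omega
      exact Nat.lt_of_mul_lt_mul_right this
    -- step C : the ZMod computation
    have hsum_split : (∑ i, χ (x i)) = ((y : ZMod r) + 1) + 2 * (Q : ZMod r) := by
      have hxcast : ∀ i : Fin (k - 1), (((x i - 1 : ℕ)) : ZMod r) = (x i : ZMod r) - 1 := by
        intro i
        rw [Nat.cast_sub (hx i).1, Nat.cast_one]
      have hT : (∑ i, (((x i - 1 : ℕ)) : ZMod r)) = (y : ZMod r) + 1 := by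
        rw [← Nat.cast_sum]
        have : (∑ i, (x i - 1)) = y - n := by omega
        rw [this, Nat.cast_sub hny, hn1]
        ring
      have hS1 : (∑ i ∈ F, (((x i - 1 : ℕ)) : ZMod r)) = -(Q : ZMod r) := by
        have : ∀ i ∈ F, (((x i - 1 : ℕ)) : ZMod r) = -(((u (x i) + 1 : ℕ)) : ZMod r) := by
          intro i _
          rw [hxcast i]
          push_cast
          rw [hucast (x i)]
          ring
        rw [Finset.sum_congr rfl this, Finset.sum_neg_distrib, hQ]
        push_cast
        ring
      have hsplit : (∑ i, χ (x i)) =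
          (∑ i ∈ F, -(((x i - 1 : ℕ)) : ZMod r)) +
          (∑ i ∈ Finset.univ.filter (fun i => ¬ (u (x i) < (x i - 1) / n)),
            (((x i - 1 : ℕ)) : ZMod r)) := by
        rw [hχ, hF]
        rw [← Finset.sum_filter_add_sum_filter_not Finset.univ
          (fun i => u (x i) < (x i - 1) / n) (fun i => χ (x i))]
        congr 1
        · refine Finset.sum_congr rfl (fun i hi => ?_)
          rw [Finset.mem_filter] at hi
          beta_reduce
          exact if_pos hi.2
        · refine Finset.sum_congr rfl (fun i hi => ?_)
          rw [Finset.mem_filter] at hi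
          beta_reduce
          exact if_neg hi.2
      have hcompl : (∑ i ∈ Finset.univ.filter (fun i => ¬ (u (x i) < (x i - 1) / n)),
          (((x i - 1 : ℕ)) : ZMod r)) =
          (∑ i, (((x i - 1 : ℕ)) : ZMod r)) - (∑ i ∈ F, (((x i - 1 : ℕ)) : ZMod r)) := by
        rw [hF]
        rw [← Finset.sum_filter_add_sum_filter_not Finset.univ
          (fun i => u (x i) < (x i - 1) / n) (fun i => (((x i - 1 : ℕ)) : ZMod r))]
        ring
      rw [hsplit, hcompl, hT, hS1, Finset.sum_neg_distrib, hS1]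
      ring
    -- finish by cases on whether y is flipped
    by_cases hyf : u y < (y - 1) / n
    · -- y flipped : 2(Q+1) = 0
      have hχy : χ y = -(y : ZMod r) + 1 := by
        rw [hχ]
        simp only [if_pos hyf]
        rw [Nat.cast_sub hy1, Nat.cast_one]
        ring
      rw [hsum_split, hχy] at hzero
      have h2Q : (2 : ZMod r) * ((Q : ZMod r) + 1) = 0 := by linear_combination hzero
      have hQ0 : ((Q + 1 : ℕ) : ZMod r) = 0 := by
        rcases mul_eq_zero.mp h2Q with h | h
        · exact absurd h h2ne
        · push_cast; exact h
      have := ZMod.val_cast_of_lt hQr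
      rw [hQ0] at this
      simp at this
    · -- y not flipped : Q ≡ u y
      have hχy : χ y = (y : ZMod r) - 1 := by
        rw [hχ]
        simp only [if_neg hyf]
        rw [Nat.cast_sub hy1, Nat.cast_one]
      rw [hsum_split, hχy] at hzero
      have h2Q : (2 : ZMod r) * ((Q : ZMod r) + (y : ZMod r)) = 0 := by linear_combination hzero
      have hQy : (Q : ZMod r) = ((u y : ℕ) : ZMod r) := by
        rcases mul_eq_zero.mp h2Q with h | h
        · exact absurd h h2ne
        · rw [hucast y]
          linear_combination h
      have hQuy : Q = u y := by
        have h1 : ((Q : ℕ) : ZMod r).val = Q := ZMod.val_cast_of_lt (by omega)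
        have h2 : ((u y : ℕ) : ZMod r).val = u y := ZMod.val_cast_of_lt (hulr y)
        rw [hQy] at h1
        omega
      set L := (y - 1) / n with hL
      have hLQ : L ≤ Q := by
        rw [hQuy]
        omega
      have hymod : y - 1 = n * L + (y - 1) % n := (Nat.div_add_mod (y - 1) n).symm
      have hmodlt : (y - 1) % n < n := Nat.mod_lt _ hn0
      have hcomm1 : L * n = n * L := Nat.mul_comm _ _
      have hcomm2 : Q * n = n * Q := Nat.mul_comm _ _
      have hyub : y ≤ L * n + n := by omega
      have hylb : L * n + n ≤ y := by
        have : L * n ≤ Q * n := Nat.mul_le_mul_right n hLQ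
        omega
      have hyeq : y = (L + 1) * n := by
        have : (L + 1) * n = L * n + n := by ring
        omega
      have hQL : Q ≤ L := by
        have h1 : Q * n + n ≤ (L + 1) * n := by rw [← hyeq]; exact hQn
        have h2 : (Q + 1) * n ≤ (L + 1) * n := by
          calc (Q + 1) * n = Q * n + n := by ring
          _ ≤ (L + 1) * n := h1
        have := Nat.le_of_mul_le_mul_right h2 hn0
        omega
      have hQLeq : Q = L := le_antisymm hQL hLQ
      -- now u y = L + 1
      have hycast : (y : ZMod r) = -(((L + 1 : ℕ)) : ZMod r) := by
        rw [hyeq]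
        push_cast
        rw [hn1]
        ring
      have huyval : u y = L + 1 := by
        have : -(y : ZMod r) = ((L + 1 : ℕ) : ZMod r) := by rw [hycast]; ring
        rw [hu] at *
        have hval : (-(y : ZMod r)).val = ((L + 1 : ℕ) : ZMod r).val := by rw [this]
        rw [ZMod.val_cast_of_lt (by omega : L + 1 < r)] at hval
        exact hval
      omega
end

section
/- Let k be a multiple of 3 with k ≥ 6. Then every coloring χ : {1,…,3k−3} → ℤ/3ℤ admits a 3-zero-sum solution to the equation E, and there exists a coloring χ : {1,…,3k−4} → ℤ/3ℤ that admits no 3-zero-sum solution to E; equivalently, S_z(k,3) = 3k − 3. -/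
/-!
Upper bound: for `k = 3n + 6` the equation has the six solutions (`a × m` stands for `m`
summands equal to `a`)
`2 + 1 × (k-2) = k`, `k + k + 1 × (k-3) = 3k-3`, `2 + (k-1) + k + 1 × (k-4) = 3k-3`,
`2 + 2 + (k-1) + (k-1) + 1 × (k-5) = 3k-3`, `1 + 2 + 4 + 4 + 4 + 3 × (k-6) = 3k-3` and
`1 + 3 + 3 + 3 + (k-1) + 2 × (k-6) = 3k-3` in `{1,…,3k-3}`; as the run lengths are known mod 3,
their color sums are six linear forms over `ZMod 3` in the colors of
`1, 2, 3, 4, k-1, k, 3k-3`, and no assignment makes all six nonzero.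

Lower bound: color `i < k` by `2i + 2 = -(i + 1)`, `k ≤ i ≤ 2k-2` by `1` or `0` according as
`i ≡ 1 (mod 3)` or not, and larger `i` by `i`. In a solution inside `{1,…,3k-4}` at most one
summand is `≥ k`, and the colors of the small summands add up to `-(their sum + their number)`,
so the color sum is determined mod 3 by `y` and the large summand; it is never `0`.
-/

open Finset

theorem hasZeroSumSolution_of_list_s7 {k r N : ℕ} {χ : ℕ → ZMod r} (l : List ℕ)
    (hlen : l.length = k - 1) (hl : ∀ z ∈ l, 1 ≤ z ∧ z ≤ N) (hy : 1 ≤ l.sum ∧ l.sum ≤ N)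
    (h : (l.map χ).sum + χ l.sum = 0) : hasZeroSumSolution k r N χ := by
  unfold hasZeroSumSolution
  generalize k - 1 = m at hlen
  subst hlen
  exact ⟨fun i => l[i], l.sum, fun i => hl _ (List.getElem_mem _), hy, by simp, by simpa⟩

theorem color_sum_ne_zero_of_not_hasZeroSumSolution {k r N : ℕ} {χ : ℕ → ZMod r}
    (hχ : ¬ hasZeroSumSolution k r N χ)
    (l : List ℕ) (m t y : ℕ) (hlen : l.length + m = k - 1) (hl : ∀ z ∈ t :: l, 1 ≤ z ∧ z ≤ N)
    (hsum : l.sum + m * t = y) (hy : 1 ≤ y ∧ y ≤ N) :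
    (l.map χ).sum + m * χ t + χ y ≠ 0 := by
  obtain ⟨ht, hl⟩ := List.forall_mem_cons.1 hl
  intro h
  refine hχ (hasZeroSumSolution_of_list_s7 (l ++ List.replicate m t) (by simpa) ?_ ?_ ?_)
  · intro z hz
    rcases List.mem_append.1 hz with hz | hz
    · exact hl z hz
    · rwa [List.eq_of_mem_replicate hz]
  · simpa [hsum] using hy
  · simpa [hsum] using h

theorem hasZeroSumSolution_three_mul_sub_three {k : ℕ} (hk3 : 3 ∣ k) (hk6 : 6 ≤ k)
    (χ : ℕ → ZMod 3) : hasZeroSumSolution k 3 (3 * k - 3) χ := by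
  obtain ⟨n, rfl⟩ : ∃ n, k = 3 * n + 6 := ⟨k / 3 - 2, by omega⟩
  rw [show 3 * (3 * n + 6) - 3 = 9 * n + 15 by omega]
  by_contra hχ
  have key := color_sum_ne_zero_of_not_hasZeroSumSolution hχ
  have h₁ := key [2] (3 * n + 4) 1 (3 * n + 6)
    (by simp; omega) (by simp) (by simp; omega) (by omega)
  have h₂ := key [3 * n + 6, 3 * n + 6] (3 * n + 3) 1 (9 * n + 15)
    (by simp; omega) (by simp; omega) (by simp; omega) (by omega)
  have h₃ := key [2, 3 * n + 5, 3 * n + 6] (3 * n + 2) 1 (9 * n + 15)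
    (by simp; omega) (by simp; omega) (by simp; omega) (by omega)
  have h₄ := key [2, 2, 3 * n + 5, 3 * n + 5] (3 * n + 1) 1 (9 * n + 15)
    (by simp; omega) (by simp; omega) (by simp; omega) (by omega)
  have h₅ := key [1, 2, 4, 4, 4] (3 * n) 3 (9 * n + 15)
    (by simp; omega) (by simp) (by simp; omega) (by omega)
  have h₆ := key [1, 3, 3, 3, 3 * n + 5] (3 * n) 2 (9 * n + 15)
    (by simp; omega) (by simp; omega) (by simp; omega) (by omega)
  push_cast at h₁ h₂ h₃ h₄ h₅ h₆
  reduce_mod_char at h₁ h₂ h₃ h₄ h₅ h₆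
  simp only [List.map_cons, List.map_nil, List.sum_cons, List.sum_nil, add_zero]
    at h₁ h₂ h₃ h₄ h₅ h₆
  revert h₁ h₂ h₃ h₄ h₅ h₆
  generalize χ 1 = a, χ 2 = b, χ 3 = c, χ 4 = d, χ (3 * n + 5) = e, χ (3 * n + 6) = f,
    χ (9 * n + 15) = g
  revert a b c d e f g
  decide

theorem Finset.add_card_sub_one_le_sum {ι : Type*} [DecidableEq ι] {s : Finset ι}
    {x : ι → ℕ} {i : ι} (hi : i ∈ s) (hx : ∀ j ∈ s, 1 ≤ x j) : x i + (#s - 1) ≤ ∑ j ∈ s, x j := by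
  rw [← add_sum_erase s x hi, ← card_erase_of_mem hi]
  simpa using card_nsmul_le_sum (s.erase i) x 1 fun j hj => hx j (mem_of_mem_erase hj)

-- Valued in `ℕ`, so that zero-sum conditions become divisibilities by 3 that `omega` decides.
def extremalColor (k i : ℕ) : ℕ :=
  if i < k then 2 * i + 2 else if i ≤ 2 * k - 2 then (if i % 3 = 1 then 1 else 0) else i

theorem sum_extremalColor_of_forall_lt {ι : Type*} {s : Finset ι} {k : ℕ} {x : ι → ℕ}
    (hx : ∀ i ∈ s, x i < k) :
    ∑ i ∈ s, extremalColor k (x i) = 2 * ∑ i ∈ s, x i + 2 * #s := by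
  rw [mul_sum, mul_comm 2 #s, ← smul_eq_mul, ← sum_const, ← sum_add_distrib]
  exact sum_congr rfl fun i hi => if_pos (hx i hi)

theorem three_not_dvd_extremalColor_sum_of_forall_lt {k y : ℕ} (hk3 : 3 ∣ k) (hk₀ : 0 < k)
    (hy : k - 1 ≤ y) :
    ¬ 3 ∣ 2 * y + 2 * (k - 1) + extremalColor k y := by
  unfold extremalColor
  split_ifs <;> omega

theorem three_not_dvd_extremalColor_sum_of_le {k z s : ℕ} (hk3 : 3 ∣ k) (hk₀ : 0 < k) (hz : k ≤ z)
    (hs : k - 2 ≤ s) (hN : z + s ≤ 3 * k - 4) :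
    ¬ 3 ∣ extremalColor k z + (2 * s + 2 * (k - 2)) + extremalColor k (z + s) := by
  unfold extremalColor
  split_ifs <;> omega

theorem not_hasZeroSumSolution_extremalColor {k : ℕ} (hk3 : 3 ∣ k) :
    ¬ hasZeroSumSolution k 3 (3 * k - 4) (fun i => extremalColor k i) := by
  rintro ⟨x, _, hx, hy, rfl, hχ⟩
  rw [← Nat.cast_sum, ← Nat.cast_add, ZMod.natCast_eq_zero_iff] at hχ
  have hk₀ : 0 < k := by omega
  by_cases hsmall : ∀ i, x i < k
  · rw [sum_extremalColor_of_forall_lt fun i _ => hsmall i, card_fin] at hχ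
    have hlow : k - 1 ≤ ∑ i, x i := by simpa using card_nsmul_le_sum univ x 1 fun i _ => (hx i).1
    exact three_not_dvd_extremalColor_sum_of_forall_lt hk3 hk₀ hlow hχ
  · push Not at hsmall
    obtain ⟨j, hj⟩ := hsmall
    set S := ∑ i ∈ univ.erase j, x i
    have hsplit : ∑ i, x i = x j + S := (add_sum_erase univ x (mem_univ j)).symm
    have hcard : #(univ.erase j) = k - 2 := by simp [card_erase_of_mem]; omega
    have hS : k - 2 ≤ S := by
      simpa [hcard] using card_nsmul_le_sum (univ.erase j) x 1 fun i hi => (hx i).1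
    have hrest : ∀ i ∈ univ.erase j, x i < k := by
      intro i hi
      have := add_card_sub_one_le_sum hi fun i _ => (hx i).1
      omega
    rw [← add_sum_erase univ _ (mem_univ j), sum_extremalColor_of_forall_lt hrest, hcard,
      hsplit] at hχ
    exact three_not_dvd_extremalColor_sum_of_le hk3 hk₀ hj hS (hsplit ▸ hy.2) hχ

theorem zero_sum_schur_eq_three (k : ℕ) (hdvd : 3 ∣ k) (hk : 6 ≤ k) :
    (∀ χ : ℕ → ZMod 3, hasZeroSumSolution k 3 (3 * k - 3) χ) ∧
    (∃ χ : ℕ → ZMod 3, ¬ hasZeroSumSolution k 3 (3 * k - 4) χ) :=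
  ⟨hasZeroSumSolution_three_mul_sub_three hdvd hk, _,
    not_hasZeroSumSolution_extremalColor hdvd⟩
end

section
/- Let ν ≥ 1 be an integer and let χ be a function from the positive integers to ℤ/νℤ such that χ(2) = 2·χ(1) in ℤ/νℤ. Then for all integers z ≥ 2ν − 1 and all n ≥ z, there exist positive integers a₁, a₂, …, a_z with a₁ + a₂ + ⋯ + a_z = n and χ(a₁) + χ(a₂) + ⋯ + χ(a_z) = n·χ(1) in ℤ/νℤ. -/
theorem valid_star_sequence_exists (ν : ℕ) (hν : 1 ≤ ν) (χ : ℕ → ZMod ν)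
    (hχ : χ 2 = 2 * χ 1) (z n : ℕ) (hz : 2 * ν - 1 ≤ z) (hn : z ≤ n) :
    ∃ a : Fin z → ℕ, (∀ i, 1 ≤ a i) ∧ (∑ i, a i) = n ∧
      (∑ i, χ (a i)) = (n : ZMod ν) * χ 1 := by
  obtain ⟨q, m, hmlt, hdm⟩ : ∃ q m, m < ν ∧ ν * q + m = n - z :=
    ⟨(n - z) / ν, (n - z) % ν, Nat.mod_lt _ hν, Nat.div_add_mod _ _⟩
  have hνm : ν + m ≤ z := by omega
  obtain ⟨k, hk⟩ : ∃ k, z = ν + m + k := ⟨z - (ν + m), by omega⟩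
  have hq1 : ν * (q + 1) = ν * q + ν := by ring
  refine ⟨fun i => if (i : ℕ) < ν then q + 1 else if (i : ℕ) < ν + m then 2 else 1,
    ?_, ?_, ?_⟩
  · intro i; beta_reduce; split_ifs <;> omega
  · refine (Fin.sum_univ_eq_sum_range
      (fun i => if i < ν then q + 1 else if i < ν + m then 2 else 1) z).trans ?_
    rw [Finset.range_eq_Ico, ← Finset.sum_Ico_consecutive _ (Nat.zero_le ν) (by omega : ν ≤ z),
      ← Finset.sum_Ico_consecutive _ (by omega : ν ≤ ν + m) (by omega : ν + m ≤ z)]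
    have h1 : ∑ i ∈ Finset.Ico 0 ν, (if i < ν then q + 1 else if i < ν + m then 2 else 1)
        = ν * (q + 1) := by
      rw [Finset.sum_congr rfl (fun i hi => by
        rw [if_pos (Finset.mem_Ico.mp hi).2]), Finset.sum_const, Nat.card_Ico, smul_eq_mul,
        Nat.sub_zero]
    have h2 : ∑ i ∈ Finset.Ico ν (ν + m), (if i < ν then q + 1 else if i < ν + m then 2 else 1)
        = m * 2 := by
      rw [Finset.sum_congr rfl (fun i hi => by
        rw [if_neg (by have := (Finset.mem_Ico.mp hi).1; omega : ¬ i < ν),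
          if_pos (Finset.mem_Ico.mp hi).2]),
        Finset.sum_const, Nat.card_Ico, smul_eq_mul]
      omega
    have h3 : ∑ i ∈ Finset.Ico (ν + m) z, (if i < ν then q + 1 else if i < ν + m then 2 else 1)
        = k := by
      rw [Finset.sum_congr rfl (fun i hi => by
        rw [if_neg (by have := (Finset.mem_Ico.mp hi).1; omega : ¬ i < ν),
          if_neg (by have := (Finset.mem_Ico.mp hi).1; omega : ¬ i < ν + m)]),
        Finset.sum_const, Nat.card_Ico, smul_eq_mul]
      omega
    rw [h1, h2, h3]; omega
  · refine (Fin.sum_univ_eq_sum_range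
      (fun i => χ (if i < ν then q + 1 else if i < ν + m then 2 else 1)) z).trans ?_
    rw [Finset.range_eq_Ico, ← Finset.sum_Ico_consecutive _ (Nat.zero_le ν) (by omega : ν ≤ z),
      ← Finset.sum_Ico_consecutive _ (by omega : ν ≤ ν + m) (by omega : ν + m ≤ z)]
    have h1 : ∑ i ∈ Finset.Ico 0 ν,
        χ (if i < ν then q + 1 else if i < ν + m then 2 else 1) = ν • χ (q + 1) := by
      rw [Finset.sum_congr rfl (fun i hi => by
        rw [if_pos (Finset.mem_Ico.mp hi).2]), Finset.sum_const, Nat.card_Ico, Nat.sub_zero]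
    have h2 : ∑ i ∈ Finset.Ico ν (ν + m),
        χ (if i < ν then q + 1 else if i < ν + m then 2 else 1) = m • χ 2 := by
      rw [Finset.sum_congr rfl (fun i hi => by
        rw [if_neg (by have := (Finset.mem_Ico.mp hi).1; omega : ¬ i < ν),
          if_pos (Finset.mem_Ico.mp hi).2]),
        Finset.sum_const, Nat.card_Ico]
      congr 1; omega
    have h3 : ∑ i ∈ Finset.Ico (ν + m) z,
        χ (if i < ν then q + 1 else if i < ν + m then 2 else 1) = k • χ 1 := by
      rw [Finset.sum_congr rfl (fun i hi => by
        rw [if_neg (by have := (Finset.mem_Ico.mp hi).1; omega : ¬ i < ν),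
          if_neg (by have := (Finset.mem_Ico.mp hi).1; omega : ¬ i < ν + m)]),
        Finset.sum_const, Nat.card_Ico]
      congr 1; omega
    rw [h1, h2, h3, hχ]
    have hzero : (ν : ℕ) • χ (q + 1) = 0 := by
      rw [nsmul_eq_mul, ZMod.natCast_self, zero_mul]
    rw [hzero, zero_add]
    have hn' : (n : ZMod ν) = ((2 * m + k : ℕ) : ZMod ν) := by
      have h : n = ν * (q + 1) + (2 * m + k) := by omega
      rw [h]
      push_cast [ZMod.natCast_self]
      ring
    rw [hn', nsmul_eq_mul, nsmul_eq_mul]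
    push_cast
    ring
end

section
/- Let r ≥ 6 be an integer and let χ be a function from the positive integers to ℤ/rℤ such that χ(α) = α·χ(1) in ℤ/rℤ for every integer α with 1 ≤ α ≤ ⌊3r/8⌋ + 1. Then for all integers z ≥ r + 4 and all n ≥ z, there exist positive integers a₁, a₂, …, a_z with a₁ + a₂ + ⋯ + a_z = n and χ(a₁) + χ(a₂) + ⋯ + χ(a_z) = n·χ(1) in ℤ/rℤ. -/
theorem valid_star_sequence_exists_general (r : ℕ) (hr : 6 ≤ r) (χ : ℕ → ZMod r)
    (hχ : ∀ α : ℕ, 1 ≤ α → α ≤ 3 * r / 8 + 1 → χ α = (α : ZMod r) * χ 1)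
    (z n : ℕ) (hz : r + 4 ≤ z) (hn : z ≤ n) :
    ∃ a : Fin z → ℕ, (∀ i, 1 ≤ a i) ∧ (∑ i, a i) = n ∧
      (∑ i, χ (a i)) = (n : ZMod r) * χ 1 := by
  have hr0 : 0 < r := by omega
  set e := (n - z + r) % r with he
  set K := (n - z + r) / r with hK
  have hdm : r * K + e = n - z + r := by
    rw [he, hK]; exact Nat.div_add_mod _ r
  have heR : e < r := Nat.mod_lt _ hr0
  have hK1 : 1 ≤ K := by
    rw [hK]; exact (Nat.one_le_div_iff hr0).mpr (by omega)
  set a' : ℕ → ℕ := fun i =>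
    if i < r then K else if i < r + 4 then 1 + (e + (i - r)) / 4 else 1 with ha'
  have hbound : ∀ i, r ≤ i → a' i ≤ 3 * r / 8 + 1 := by
    intro i hi
    simp only [ha']
    rw [if_neg (by omega)]
    split
    · have h1 : (e + (i - r)) / 4 ≤ (e + 3) / 4 := Nat.div_le_div_right (by omega)
      have h2 : (e + 3) / 4 ≤ 3 * r / 8 := by omega
      omega
    · omega
  have hpos : ∀ i, 1 ≤ a' i := by
    intro i; simp only [ha']
    split
    · exact hK1
    · split <;> omega
  have hsum1 : ∑ i ∈ Finset.range r, a' i = r * K := by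
    have hc : ∀ i ∈ Finset.range r, a' i = K := by
      intro i hi; simp only [ha']; rw [if_pos (Finset.mem_range.mp hi)]
    rw [Finset.sum_congr rfl hc, Finset.sum_const, Finset.card_range, smul_eq_mul]
  have hsum2 : ∑ i ∈ Finset.Ico r (r + 4), a' i = 4 + e := by
    rw [Finset.sum_Ico_eq_sum_range]
    have h4 : r + 4 - r = 4 := by omega
    rw [h4]
    have hj : ∀ j ∈ Finset.range 4, a' (r + j) = 1 + (e + j) / 4 := by
      intro j hj
      simp only [Finset.mem_range] at hj
      simp only [ha']
      rw [if_neg (by omega), if_pos (by omega)]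
      congr 2
      omega
    rw [Finset.sum_congr rfl hj]
    simp [Finset.sum_range_succ]
    omega
  have hsum3 : ∑ i ∈ Finset.Ico (r + 4) z, a' i = z - (r + 4) := by
    have hc : ∀ i ∈ Finset.Ico (r + 4) z, a' i = 1 := by
      intro i hi
      simp only [Finset.mem_Ico] at hi
      simp only [ha']
      rw [if_neg (by omega), if_neg (by omega)]
    rw [Finset.sum_congr rfl hc, Finset.sum_const, Nat.card_Ico, smul_eq_mul, mul_one]
  have hsplit2 : ∑ i ∈ Finset.Ico r z, a' i = (4 + e) + (z - (r + 4)) := by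
    rw [← Finset.sum_Ico_consecutive (f := a') (m := r) (n := r + 4) (k := z) (by omega) (by omega),
      hsum2, hsum3]
  have htotal : ∑ i ∈ Finset.range z, a' i = n := by
    rw [Finset.range_eq_Ico,
      ← Finset.sum_Ico_consecutive (f := a') (m := 0) (n := r) (k := z) (by omega) (by omega),
      ← Finset.range_eq_Ico, hsum1, hsplit2]
    omega
  have hIcoSum : ∑ i ∈ Finset.Ico r z, a' i = n - r * K := by omega
  have hchi : ∑ i ∈ Finset.range z, χ (a' i) = (n : ZMod r) * χ 1 := by
    rw [Finset.range_eq_Ico,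
      ← Finset.sum_Ico_consecutive (f := fun i => χ (a' i)) (m := 0) (n := r) (k := z)
        (by omega) (by omega), ← Finset.range_eq_Ico]
    have h1 : ∑ i ∈ Finset.range r, χ (a' i) = 0 := by
      have hc : ∀ i ∈ Finset.range r, χ (a' i) = χ K := by
        intro i hi
        simp only [ha']
        rw [if_pos (Finset.mem_range.mp hi)]
      rw [Finset.sum_congr rfl hc, Finset.sum_const, Finset.card_range, nsmul_eq_mul,
        ZMod.natCast_self, zero_mul]
    have h2 : ∑ i ∈ Finset.Ico r z, χ (a' i) = (n : ZMod r) * χ 1 := by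
      have hc : ∀ i ∈ Finset.Ico r z, χ (a' i) = (a' i : ZMod r) * χ 1 := by
        intro i hi
        simp only [Finset.mem_Ico] at hi
        exact hχ _ (hpos i) (hbound i hi.1)
      rw [Finset.sum_congr rfl hc, ← Finset.sum_mul, ← Nat.cast_sum, hIcoSum]
      have hle : r * K ≤ n := by omega
      have : ((n - r * K : ℕ) : ZMod r) = (n : ZMod r) := by
        rw [Nat.cast_sub hle]
        push_cast [ZMod.natCast_self]
        ring
      rw [this]
    rw [h1, h2, zero_add]
  refine ⟨fun i => a' i, fun i => hpos _, ?_, ?_⟩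
  · rw [Fin.sum_univ_eq_sum_range]; exact htotal
  · rw [Fin.sum_univ_eq_sum_range (fun i => χ (a' i))]; exact hchi
end

section
/- Let r be an odd prime, let k be a multiple of r with k ≥ 2r, and suppose χ : {1,…,kr−r} → ℤ/rℤ is a coloring that admits no r-zero-sum solution to the equation E and satisfies χ(2) = 2·χ(1) in ℤ/rℤ. Then χ(α) = α·χ(1) in ℤ/rℤ for every integer α with 1 ≤ α ≤ r. -/
lemma exists_parts (B : ℕ) (hB : 1 ≤ B) :
    ∀ n m : ℕ, n ≤ m → m ≤ n * B →
      ∃ f : Fin n → ℕ, (∀ i, 1 ≤ f i ∧ f i ≤ B) ∧ ∑ i, f i = m := by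
  intro n
  induction n with
  | zero =>
    intro m _ h2
    refine ⟨Fin.elim0, fun i => i.elim0, ?_⟩
    simp only [Nat.zero_mul, Nat.le_zero] at h2
    simp [h2]
  | succ n ih =>
    intro m h1 h2
    have hnt : n ≤ n * B := Nat.le_mul_of_pos_right n (by omega)
    have h2' : m ≤ n * B + B := by
      have h : (n+1) * B = n * B + B := by ring
      omega
    obtain ⟨v, hvor, hv1, hv2, hv3⟩ :
        ∃ v, (v = B ∨ v = m - n) ∧ 1 ≤ v ∧ v ≤ B ∧ v ≤ m - n :=
      ⟨min B (m - n), min_choice _ _, le_min hB (by omega), min_le_left _ _, min_le_right _ _⟩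
    have h3 : n ≤ m - v := by omega
    have h4 : m - v ≤ n * B := by rcases hvor with h | h <;> omega
    obtain ⟨f, hf, hsum⟩ := ih (m - v) h3 h4
    refine ⟨Fin.cons v f, ?_, ?_⟩
    · intro i
      refine Fin.cases ?_ ?_ i
      · exact ⟨hv1, hv2⟩
      · intro j; simpa using hf j
    · rw [Fin.sum_cons, hsum]; omega

lemma helper_ineq (r k β c : ℕ) (hr : 3 ≤ r) (hk : 2*r ≤ k) (hβ3 : 3 ≤ β)
    (hβr : β ≤ r) (hc : c < r) :
    ∃ m, (k-1)*(β-1) = c*β + m ∧ (k-1) - c ≤ m ∧ m ≤ ((k-1) - c)*(β-1) := by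
  obtain ⟨a, rfl⟩ : ∃ a, β = a + 2 := ⟨β - 2, by omega⟩
  have ha : 1 ≤ a := by omega
  obtain ⟨K', hK'⟩ : ∃ K', k - 1 = c + K' := ⟨k - 1 - c, by omega⟩
  have hcK : c < K' := by omega
  have e1 : a + 2 - 1 = a + 1 := by omega
  rw [e1, hK']
  have h2 : K' * 2 ≤ K' * (a+1) := Nat.mul_le_mul_left _ (by omega)
  have h2' : K' * 2 = K' + K' := by ring
  have hle : c + K' ≤ K' * (a+1) := by linarith
  obtain ⟨m, hm⟩ := Nat.le.dest hle
  refine ⟨K' + m, ?_, by omega, ?_⟩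
  · calc (c + K') * (a+1) = c*(a+1) + K'*(a+1) := by ring
      _ = c*(a+1) + (c + K' + m) := by rw [← hm]
      _ = c*(a+2) + (K' + m) := by ring
  · have hck : c + K' - c = K' := by omega
    rw [hck]
    linarith [hm]

theorem no_solution_implies_linear (r k : ℕ) (hrp : r.Prime) (hodd : Odd r)
    (hdvd : r ∣ k) (hk : 2 * r ≤ k) (χ : ℕ → ZMod r)
    (hno : ¬ hasZeroSumSolution k r (k * r - r) χ)
    (hχ2 : χ 2 = 2 * χ 1)
    (α : ℕ) (h1 : 1 ≤ α) (hα : α ≤ r) :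
    χ α = (α : ZMod r) * χ 1 := by
  haveI : Fact r.Prime := ⟨hrp⟩
  haveI : NeZero r := ⟨hrp.pos.ne'⟩
  have hr3 : 3 ≤ r := by
    rcases hodd with ⟨t, ht⟩
    have := hrp.two_le
    omega
  suffices H : ∀ β, 1 ≤ β → β ≤ r → χ β = (β : ZMod r) * χ 1 from H α h1 hα
  intro β
  induction β using Nat.strong_induction_on with
  | _ β ih =>
  intro hβ1 hβr
  by_cases hb1 : β = 1
  · subst hb1; simp
  by_cases hb2 : β = 2
  · subst hb2; rw [hχ2]; norm_num
  have hβ3 : 3 ≤ β := by omega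
  by_contra hne
  have hd : χ β - (β : ZMod r) * χ 1 ≠ 0 := sub_ne_zero.mpr hne
  set y : ℕ := (k - 1) * (β - 1) with hy
  set c : ℕ := ((-(χ y + (y : ZMod r) * χ 1)) * (χ β - (β : ZMod r) * χ 1)⁻¹).val with hcdef
  have hcr : c < r := ZMod.val_lt _
  have hcast : (c : ZMod r) = (-(χ y + (y : ZMod r) * χ 1)) * (χ β - (β : ZMod r) * χ 1)⁻¹ :=
    ZMod.natCast_rightInverse _
  have hCd : (c : ZMod r) * (χ β - (β : ZMod r) * χ 1) = -(χ y + (y : ZMod r) * χ 1) := by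
    rw [hcast, mul_assoc, inv_mul_cancel₀ hd, mul_one]
  obtain ⟨m, hmy, hm1, hm2⟩ := helper_ineq r k β c hr3 hk hβ3 hβr hcr
  rw [← hy] at hmy
  obtain ⟨f, hf, hsum⟩ := exists_parts (β - 1) (by omega) (k - 1 - c) m hm1 hm2
  have hck : c + (k - 1 - c) = k - 1 := by omega
  set x : Fin (k - 1) → ℕ :=
    fun i => Fin.append (fun _ : Fin c => β) f (Fin.cast hck.symm i) with hxdef
  have hkr2 : (k-1)*r = k*r - r := by
    have h := Nat.sub_mul k 1 r
    simpa using h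
  have hrN : r ≤ k*r - r := by
    rw [← hkr2]
    exact Nat.le_mul_of_pos_left r (by omega)
  have hyN : y ≤ k*r - r := by
    calc y ≤ (k-1)*r := Nat.mul_le_mul_left _ (by omega)
      _ = k*r - r := hkr2
  have hx_sum : ∀ {M : Type} [AddCommMonoid M] (g : ℕ → M),
      ∑ i, g (x i) = c • g β + ∑ j, g (f j) := by
    intro M _ g
    have e : (∑ i, g (x i)) = ∑ j : Fin (c + (k-1-c)), g (Fin.append (fun _ : Fin c => β) f j) :=
      Fintype.sum_equiv (finCongr hck.symm) _ _ (fun i => rfl)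
    rw [e, Fin.sum_univ_add]
    simp [Fin.append_left, Fin.append_right]
  apply hno
  refine ⟨x, y, ?_, ⟨?_, hyN⟩, ?_, ?_⟩
  · intro i
    have key : ∀ j : Fin (c + (k-1-c)),
        1 ≤ Fin.append (fun _ : Fin c => β) f j ∧ Fin.append (fun _ : Fin c => β) f j ≤ k*r - r := by
      intro j
      refine Fin.addCases ?_ ?_ j
      · intro j1; rw [Fin.append_left]
        exact ⟨by omega, le_trans hβr hrN⟩
      · intro j2; rw [Fin.append_right]
        exact ⟨(hf j2).1, le_trans (le_trans (hf j2).2 (by omega)) hrN⟩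
    exact key _
  · have hpos : 0 < (k-1)*(β-1) := Nat.mul_pos (by omega) (by omega)
    rw [hy]; omega
  · have h := hx_sum (fun n => n)
    rw [h, hsum, smul_eq_mul]
    exact hmy.symm
  · have h := hx_sum χ
    rw [h]
    have hfval : ∑ j, χ (f j) = ((m : ℕ) : ZMod r) * χ 1 := by
      rw [← hsum]
      push_cast
      rw [Finset.sum_mul]
      refine Finset.sum_congr rfl (fun j _ => ?_)
      exact ih (f j) (by have := (hf j).2; omega) (hf j).1 (by have := (hf j).2; omega)
    rw [hfval, nsmul_eq_mul]
    have hycast : ((y : ℕ) : ZMod r) = (c : ZMod r) * (β : ZMod r) + (m : ZMod r) := by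
      exact_mod_cast congrArg (fun n : ℕ => (n : ZMod r)) hmy
    linear_combination hCd - χ 1 * hycast
end

section
/- Let r ≥ 1 be odd, let k ≥ 2 be an integer, and suppose χ : {1,…,kr−r−1} → ℤ/rℤ is a coloring such that for every integer α with 1 ≤ α ≤ r and every m in the domain: (i) if m ≤ αk − α then χ(m) lies in the set {m, m+2, m+4, …, m+2(α−1)} reduced mod r, and (ii) if m ≥ αk − α then χ(m) does not lie in the set {−m, −m−2, −m−4, …, −m−2(α−1)} reduced mod r. Then χ admits no r-zero-sum solution to the equation E. -/
theorem odd_coloring_properties_imply_no_solution (r k : ℕ) (hr1 : 1 ≤ r)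
    (hodd : Odd r) (hk : 2 ≤ k) (χ : ℕ → ZMod r)
    (hχ : ∀ α m : ℕ, 1 ≤ α → α ≤ r → 1 ≤ m → m ≤ k * r - r - 1 →
      (m ≤ α * k - α → ∃ j : ℕ, j < α ∧ χ m = (m : ZMod r) + 2 * (j : ZMod r)) ∧
      (α * k - α ≤ m → ∀ j : ℕ, j < α → χ m ≠ -(m : ZMod r) - 2 * (j : ZMod r))) :
    ¬ hasZeroSumSolution k r (k * r - r - 1) χ := by
  rintro ⟨x, y, hx, ⟨hy1, hy2⟩, hsum, hzero⟩
  obtain ⟨d, rfl⟩ : ∃ d, k = d + 1 := ⟨k - 1, by omega⟩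
  have hd : 1 ≤ d := by omega
  have hdpos : 0 < d := hd
  have hrd : (d + 1) * r - r = r * d := by
    have : (d + 1) * r = r * d + r := by ring
    omega
  have key : ∀ i, ∃ j : ℕ, j * d + 1 ≤ x i ∧
      χ (x i) = (x i : ZMod r) + 2 * (j : ZMod r) := by
    intro i
    obtain ⟨hx1, hx2⟩ := hx i
    set m := x i with hm
    have hN : m ≤ r * d - 1 := by omega
    have hrdpos : 1 ≤ r * d := Nat.one_le_iff_ne_zero.mpr (by positivity)
    have hdiv1 : m - 1 < ((m - 1) / d + 1) * d :=
      (Nat.div_lt_iff_lt_mul hdpos).mp (Nat.lt_succ_self _)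
    have hdiv2 : ((m - 1) / d) * d ≤ m - 1 := Nat.div_mul_le_self _ _
    have hαr : (m - 1) / d + 1 ≤ r := by
      have h1 : m - 1 < r * d := by omega
      have h2 := (Nat.div_lt_iff_lt_mul hdpos).mpr h1
      omega
    obtain ⟨q, hq⟩ : ∃ q, (m - 1) / d = q := ⟨_, rfl⟩
    rw [hq] at hdiv1 hdiv2 hαr
    have hmul : (q + 1) * (d + 1) = (q + 1) * d + (q + 1) := by ring
    obtain ⟨h1, -⟩ := hχ (q + 1) m (by omega) hαr hx1 hx2
    obtain ⟨j, hjlt, hχm⟩ := h1 (by omega)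
    refine ⟨j, ?_, hχm⟩
    have hjq : j * d ≤ q * d := Nat.mul_le_mul_right d (by omega)
    omega
  choose j hj1 hj2 using key
  set J := ∑ i, j i with hJ
  have hsum1 : J * d + d ≤ y := by
    have h : ∑ i, (j i * d + 1) ≤ ∑ i, x i := Finset.sum_le_sum fun i _ => hj1 i
    rw [Finset.sum_add_distrib, ← Finset.sum_mul, Finset.sum_const, Finset.card_univ,
      Fintype.card_fin, hsum] at h
    simp only [smul_eq_mul, mul_one] at h
    rw [← hJ] at h
    omega
  have hJr : J + 1 ≤ r := by
    have h1 : (J + 1) * d < r * d := by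
      have : (J + 1) * d = J * d + d := by ring
      omega
    have h2 : J + 1 < r := lt_of_mul_lt_mul_right h1 (Nat.zero_le d)
    omega
  have hsum2 : (∑ i, χ (x i)) = (y : ZMod r) + 2 * (J : ZMod r) := by
    calc ∑ i, χ (x i) = ∑ i, ((x i : ZMod r) + 2 * (j i : ZMod r)) :=
          Finset.sum_congr rfl fun i _ => hj2 i
      _ = ((∑ i, x i : ℕ) : ZMod r) + 2 * ((∑ i, j i : ℕ) : ZMod r) := by
          push_cast
          rw [Finset.sum_add_distrib, Finset.mul_sum]
      _ = (y : ZMod r) + 2 * (J : ZMod r) := by rw [hsum]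
  have hχy : χ y = -(y : ZMod r) - 2 * (J : ZMod r) := by
    rw [hsum2] at hzero
    linear_combination hzero
  obtain ⟨-, h2⟩ := hχ (J + 1) y (by omega) hJr hy1 hy2
  have hmul2 : (J + 1) * (d + 1) = (J + 1) * d + (J + 1) := by ring
  have hge : (J + 1) * (d + 1) - (J + 1) ≤ y := by
    have : (J + 1) * d = J * d + d := by ring
    omega
  exact h2 hge J (Nat.lt_succ_self J) hχy
end

section
/- Let r ≥ 2 be even, let k ≥ 2 be an integer, and suppose χ : {1,…,kr−r−2} → ℤ/rℤ is a coloring such that: for every integer α with 1 ≤ α ≤ r−2 and every m in the domain, (i) if m ≤ αk − α then χ(m) lies in {m, m+1, m+2, …, m+(α−1)} reduced mod r, and (ii) if m ≥ αk − α then χ(m) does not lie in {−m, −m−1, −m−2, …, −m−(α−1)} reduced mod r; and moreover, (iii) if m ≤ (r−1)k − (r−1) − 1 then χ(m) lies in {m, m+1, …, m+(r−2)} reduced mod r, and (iv) if m ≥ (r−1)k − (r−1) then χ(m) does not lie in {−m, −m−1, …, −m−(r−2)} reduced mod r. Then χ admits no r-zero-sum solution to the equation E. -/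
theorem even_coloring_properties_imply_no_solution (r k : ℕ) (hr2 : 2 ≤ r)
    (heven : Even r) (hk : 2 ≤ k) (χ : ℕ → ZMod r)
    (hχ : ∀ α m : ℕ, 1 ≤ α → α ≤ r - 2 → 1 ≤ m → m ≤ k * r - r - 2 →
      (m ≤ α * k - α → ∃ j : ℕ, j < α ∧ χ m = (m : ZMod r) + (j : ZMod r)) ∧
      (α * k - α ≤ m → ∀ j : ℕ, j < α → χ m ≠ -(m : ZMod r) - (j : ZMod r)))
    (hχ' : ∀ m : ℕ, 1 ≤ m → m ≤ k * r - r - 2 →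
      (m ≤ (r - 1) * k - (r - 1) - 1 →
        ∃ j : ℕ, j < r - 1 ∧ χ m = (m : ZMod r) + (j : ZMod r)) ∧
      ((r - 1) * k - (r - 1) ≤ m →
        ∀ j : ℕ, j < r - 1 → χ m ≠ -(m : ZMod r) - (j : ZMod r))) :
    ¬ hasZeroSumSolution k r (k * r - r - 2) χ := by
  haveI : NeZero r := ⟨by omega⟩
  rintro ⟨x, y, hx, ⟨hy1, hy2⟩, hsum, hzero⟩
  -- define j m as the offset of χ m from m
  set j : ℕ → ℕ := fun m => (χ m - (m : ZMod r)).val with hjdef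
  have hjlt : ∀ m, j m < r := fun m => ZMod.val_lt _
  have hjcast : ∀ m, χ m = (m : ZMod r) + (j m : ZMod r) := by
    intro m
    simp only [hjdef, ZMod.natCast_val, ZMod.cast_id]
    ring
  -- uniqueness of offsets
  have huniq : ∀ m (j' : ℕ), j' < r → χ m = (m : ZMod r) + (j' : ZMod r) → j' = j m := by
    intro m j' hj' heq
    have h1 : (j' : ZMod r) = (j m : ZMod r) := by
      have := hjcast m
      rw [heq] at this
      exact add_left_cancel this
    calc j' = ((j' : ZMod r)).val := (ZMod.val_cast_of_lt hj').symm
      _ = ((j m : ZMod r)).val := by rw [h1]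
      _ = j m := ZMod.val_cast_of_lt (hjlt m)
  -- key lower bounds on m given j m
  have key : ∀ m, 1 ≤ m → m ≤ k * r - r - 2 →
      (j m ≤ r - 2 → j m * (k - 1) + 1 ≤ m) ∧ (j m = r - 1 → (r - 1) * (k - 1) ≤ m) := by
    intro m hm1 hm2
    constructor
    · intro hjm
      by_cases h0 : j m = 0
      · simp [h0]; omega
      by_contra hcon
      push_neg at hcon
      have hmulk : j m * (k - 1) = j m * k - j m := by rw [Nat.mul_sub, mul_one]
      have hle : m ≤ j m * k - j m := by omega
      obtain ⟨j', hj'lt, hj'eq⟩ := (hχ (j m) m (by omega) hjm hm1 hm2).1 hle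
      have := huniq m j' (by omega) hj'eq
      omega
    · intro hjm
      by_contra hcon
      push_neg at hcon
      have hmulk : (r - 1) * (k - 1) = (r - 1) * k - (r - 1) := by rw [Nat.mul_sub, mul_one]
      have hle : m ≤ (r - 1) * k - (r - 1) - 1 := by
        have : 1 ≤ (r - 1) * (k - 1) := Nat.one_le_iff_ne_zero.mpr (Nat.mul_ne_zero (by omega) (by omega))
        omega
      obtain ⟨j', hj'lt, hj'eq⟩ := (hχ' m hm1 hm2).1 hle
      have := huniq m j' (by omega) hj'eq
      omega
  -- no x i has offset r - 1
  have hxle : ∀ i, x i + (k - 2) ≤ y := by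
    intro i
    rw [← hsum, ← Finset.add_sum_erase _ _ (Finset.mem_univ i)]
    have h2 : (Finset.univ.erase i).card • 1 ≤ ∑ i' ∈ Finset.univ.erase i, x i' :=
      Finset.card_nsmul_le_sum _ _ _ (fun i' _ => (hx i').1)
    have hcard : (Finset.univ.erase i).card = k - 1 - 1 := by
      rw [Finset.card_erase_of_mem (Finset.mem_univ i)]
      simp
    rw [hcard, smul_eq_mul, mul_one] at h2
    omega
  have hnotop : ∀ i, j (x i) ≤ r - 2 := by
    intro i
    by_contra h
    have hji : j (x i) = r - 1 := by have := hjlt (x i); omega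
    have h1 : (r - 1) * (k - 1) ≤ x i := (key (x i) (hx i).1 (hx i).2).2 hji
    have h2 := hxle i
    -- y ≤ k*r - r - 2 and x i + (k-2) ≤ y, but x i ≥ (r-1)(k-1)
    have he1 : (r - 1) * (k - 1) + (k - 1) + (r - 1) + 1 = k * r := by
      have e1 : r - 1 + 1 = r := by omega
      have e2 : k - 1 + 1 = k := by omega
      calc (r - 1) * (k - 1) + (k - 1) + (r - 1) + 1
          = (r - 1 + 1) * (k - 1 + 1) := by ring
        _ = r * k := by rw [e1, e2]
        _ = k * r := mul_comm r k
    omega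
  -- lower bound for each x i
  have hxlb : ∀ i, j (x i) * (k - 1) + 1 ≤ x i := fun i =>
    (key (x i) (hx i).1 (hx i).2).1 (hnotop i)
  set S := ∑ i, j (x i) with hSdef
  have hsumlb : S * (k - 1) + (k - 1) ≤ y := by
    rw [← hsum]
    calc S * (k - 1) + (k - 1) = ∑ i, (j (x i) * (k - 1) + 1) := by
          rw [Finset.sum_add_distrib, ← Finset.sum_mul, Finset.sum_const, Finset.card_univ,
            Fintype.card_fin, smul_eq_mul, mul_one]
      _ ≤ ∑ i, x i := Finset.sum_le_sum (fun i _ => hxlb i)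
  -- S ≤ r - 2
  have hrk : r * (k - 1) = k * r - r := by
    rw [Nat.mul_sub, mul_one, mul_comm]
  have hSle : S ≤ r - 2 := by
    have h1 : (S + 1) * (k - 1) ≤ y := by rw [add_mul, one_mul]; omega
    have h2 : (S + 1) * (k - 1) < r * (k - 1) := by omega
    have h3 : S + 1 < r := lt_of_mul_lt_mul_right h2 (Nat.zero_le _)
    omega
  -- zero-sum condition gives χ y = -y - S
  have hχy : χ y = -(y : ZMod r) - (S : ZMod r) := by
    have h1 : (∑ i, χ (x i)) = (y : ZMod r) + (S : ZMod r) := by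
      calc (∑ i, χ (x i)) = ∑ i, ((x i : ZMod r) + (j (x i) : ZMod r)) :=
            Finset.sum_congr rfl (fun i _ => hjcast (x i))
        _ = (∑ i, (x i : ℕ) : ℕ) + (S : ZMod r) := by
            rw [Finset.sum_add_distrib, Nat.cast_sum, hSdef, Nat.cast_sum]
        _ = (y : ZMod r) + (S : ZMod r) := by rw [hsum]
    rw [h1] at hzero
    linear_combination hzero
  -- derive contradiction
  have hylb : (S + 1) * (k - 1) ≤ y := by rw [add_mul, one_mul]; omega
  by_cases hS : S + 1 ≤ r - 2
  · have hmulk : (S + 1) * (k - 1) = (S + 1) * k - (S + 1) := by rw [Nat.mul_sub, mul_one]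
    exact (hχ (S + 1) y (by omega) hS hy1 hy2).2 (by omega) S (by omega) hχy
  · have hSeq : S = r - 2 := by omega
    have hmulk : (r - 1) * (k - 1) = (r - 1) * k - (r - 1) := by rw [Nat.mul_sub, mul_one]
    have hylb' : (r - 1) * k - (r - 1) ≤ y := by
      have : (r - 1) * (k - 1) = (S + 1) * (k - 1) := by rw [hSeq]; congr 1; omega
      omega
    exact (hχ' y hy1 hy2).2 hylb' S (by omega) hχy
end
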